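/- arXiv:2511.17739 — 8 statements merged into one kernel-verified Lean document; each statement's English description precedes it below -/
import Mathlib

section
/- For every directed reflexive graph G, the functor G □ − (box product) on the category of directed reflexive graphs admits a right adjoint; hence (DiGraph, □, J₀) is a biclosed monoidal category. -/
open CategoryTheory

/-- A directed reflexive graph: a set with a reflexive binary relation `adj`
(`adj x y` means there is an edge `x ⇝ y`). -/
structure DiGraph where
  V : Type
  adj : V → V → Prop
  refl : ∀ x, adj x x

/-- Morphisms of directed reflexive graphs are relation-preserving functions. -/
instance : Category DiGraph where
  Hom G H := { f : G.V → H.V // ∀ x y, G.adj x y → H.adj (f x) (f y) }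
  id G := ⟨fun x => x, fun _ _ h => h⟩
  comp f g := ⟨fun x => g.1 (f.1 x), fun x y h => g.2 _ _ (f.2 x y h)⟩

/-- `J₀`, the one-vertex graph. -/
def J0 : DiGraph := ⟨PUnit, fun _ _ => True, fun _ => trivial⟩

/-- `J₁`, the graph with two vertices `0 = false`, `1 = true` and one
non-loop edge `0 ⇝ 1`. -/
def J1 : DiGraph :=
  ⟨Bool, fun x y => x = y ∨ (x = false ∧ y = true), fun _ => Or.inl rfl⟩

/-- The box product `G □ H`. -/
def boxProd (G H : DiGraph) : DiGraph where
  V := G.V × H.V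
  adj x y := (x.1 = y.1 ∧ H.adj x.2 y.2) ∨ (G.adj x.1 y.1 ∧ x.2 = y.2)
  refl x := Or.inl ⟨rfl, H.refl x.2⟩

/-- The categorical product `G ⊠ H`. -/
def catProd (G H : DiGraph) : DiGraph where
  V := G.V × H.V
  adj x y := (x.1 = y.1 ∧ H.adj x.2 y.2) ∨ (G.adj x.1 y.1 ∧ x.2 = y.2) ∨
    (G.adj x.1 y.1 ∧ H.adj x.2 y.2)
  refl x := Or.inl ⟨rfl, H.refl x.2⟩

/-- The box product as a bifunctor. -/
def boxBifunctor : DiGraph ⥤ DiGraph ⥤ DiGraph where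
  obj G :=
    { obj := fun H => boxProd G H
      map := fun {H K} φ =>
        ⟨fun x => (x.1, φ.1 x.2), by
          rintro ⟨g, h⟩ ⟨g', h'⟩ (⟨e, hadj⟩ | ⟨gadj, e⟩)
          · exact Or.inl ⟨e, φ.2 _ _ hadj⟩
          · exact Or.inr ⟨gadj, congrArg φ.1 e⟩⟩
      map_id := fun H => rfl
      map_comp := fun f g => rfl }
  map {G G'} ψ :=
    { app := fun H =>
        ⟨fun x => (ψ.1 x.1, x.2), by
          rintro ⟨g, h⟩ ⟨g', h'⟩ (⟨e, hadj⟩ | ⟨gadj, e⟩)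
          · exact Or.inl ⟨congrArg ψ.1 e, hadj⟩
          · exact Or.inr ⟨ψ.2 _ _ gadj, e⟩⟩
      naturality := fun H K φ => rfl }
  map_id := fun G => rfl
  map_comp := fun f g => rfl

/-- The categorical product as a bifunctor. -/
def catBifunctor : DiGraph ⥤ DiGraph ⥤ DiGraph where
  obj G :=
    { obj := fun H => catProd G H
      map := fun {H K} φ =>
        ⟨fun x => (x.1, φ.1 x.2), by
          rintro ⟨g, h⟩ ⟨g', h'⟩ (⟨e, hadj⟩ | ⟨gadj, e⟩ | ⟨gadj, hadj⟩)
          · exact Or.inl ⟨e, φ.2 _ _ hadj⟩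
          · exact Or.inr (Or.inl ⟨gadj, congrArg φ.1 e⟩)
          · exact Or.inr (Or.inr ⟨gadj, φ.2 _ _ hadj⟩)⟩
      map_id := fun H => rfl
      map_comp := fun f g => rfl }
  map {G G'} ψ :=
    { app := fun H =>
        ⟨fun x => (ψ.1 x.1, x.2), by
          rintro ⟨g, h⟩ ⟨g', h'⟩ (⟨e, hadj⟩ | ⟨gadj, e⟩ | ⟨gadj, hadj⟩)
          · exact Or.inl ⟨congrArg ψ.1 e, hadj⟩
          · exact Or.inr (Or.inl ⟨ψ.2 _ _ gadj, e⟩)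
          · exact Or.inr (Or.inr ⟨ψ.2 _ _ gadj, hadj⟩)⟩
      naturality := fun H K φ => rfl }
  map_id := fun G => rfl
  map_comp := fun f g => rfl

/-- Internal hom for the box product. -/
def bhom (G H : DiGraph) : DiGraph where
  V := G ⟶ H
  adj f g := ∀ x, H.adj (f.1 x) (g.1 x)
  refl f x := H.refl _

def bhomFunctor (G : DiGraph) : DiGraph ⥤ DiGraph where
  obj H := bhom G H
  map {H K} φ := ⟨fun f => f ≫ φ, fun f g h x => φ.2 _ _ (h x)⟩
  map_id _ := rfl
  map_comp _ _ := rfl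

def boxAdj (G : DiGraph) : boxBifunctor.obj G ⊣ bhomFunctor G :=
  Adjunction.mkOfHomEquiv
    { homEquiv := fun K H =>
        { toFun := fun F => ⟨fun k => ⟨fun g => F.1 (g, k),
            fun g g' h => F.2 _ _ (Or.inr ⟨h, rfl⟩)⟩,
            fun k k' h g => F.2 _ _ (Or.inl ⟨rfl, h⟩)⟩
          invFun := fun Φ => ⟨fun x => (Φ.1 x.2).1 x.1, by
            rintro ⟨g, k⟩ ⟨g', k'⟩ (⟨e, hk⟩ | ⟨hg, e⟩)
            · cases e; exact Φ.2 _ _ hk g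
            · cases e; exact (Φ.1 k).2 _ _ hg⟩
          left_inv := fun F => rfl
          right_inv := fun Φ => rfl }
      homEquiv_naturality_left_symm := fun _ _ => rfl
      homEquiv_naturality_right := fun _ _ => rfl }

def boxAdj' (G : DiGraph) : boxBifunctor.flip.obj G ⊣ bhomFunctor G :=
  Adjunction.mkOfHomEquiv
    { homEquiv := fun K H =>
        { toFun := fun F => ⟨fun k => ⟨fun g => F.1 (k, g),
            fun g g' h => F.2 _ _ (Or.inl ⟨rfl, h⟩)⟩,
            fun k k' h g => F.2 _ _ (Or.inr ⟨h, rfl⟩)⟩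
          invFun := fun Φ => ⟨fun x => (Φ.1 x.1).1 x.2, by
            rintro ⟨k, g⟩ ⟨k', g'⟩ (⟨e, hg⟩ | ⟨hk, e⟩)
            · cases e; exact (Φ.1 k).2 _ _ hg
            · cases e; exact Φ.2 _ _ hk g⟩
          left_inv := fun F => rfl
          right_inv := fun Φ => rfl }
      homEquiv_naturality_left_symm := fun _ _ => rfl
      homEquiv_naturality_right := fun _ _ => rfl }

def boxMonoidal : MonoidalCategory DiGraph where
  tensorObj := boxProd
  whiskerLeft G {H K} φ := ⟨fun x => (x.1, φ.1 x.2), by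
    rintro ⟨g, h⟩ ⟨g', h'⟩ (⟨e, ha⟩ | ⟨ga, e⟩)
    · exact Or.inl ⟨e, φ.2 _ _ ha⟩
    · exact Or.inr ⟨ga, congrArg φ.1 e⟩⟩
  whiskerRight {G G'} ψ H := ⟨fun x => (ψ.1 x.1, x.2), by
    rintro ⟨g, h⟩ ⟨g', h'⟩ (⟨e, ha⟩ | ⟨ga, e⟩)
    · exact Or.inl ⟨congrArg ψ.1 e, ha⟩
    · exact Or.inr ⟨ψ.2 _ _ ga, e⟩⟩
  tensorUnit := J0
  associator G H K :=
    { hom := ⟨fun x => (x.1.1, (x.1.2, x.2)), by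
        rintro ⟨⟨g, h⟩, k⟩ ⟨⟨g', h'⟩, k'⟩ (⟨e, ka⟩ | ⟨(⟨e1, ha⟩ | ⟨ga, e2⟩), e⟩)
        · injection e with e1 e2; cases e1; cases e2
          exact Or.inl ⟨rfl, Or.inl ⟨rfl, ka⟩⟩
        · cases e1; cases e
          exact Or.inl ⟨rfl, Or.inr ⟨ha, rfl⟩⟩
        · cases e2; cases e
          exact Or.inr ⟨ga, rfl⟩⟩
      inv := ⟨fun x => ((x.1, x.2.1), x.2.2), by
        rintro ⟨g, h, k⟩ ⟨g', h', k'⟩ (⟨e, (⟨e1, ha⟩ | ⟨ha, e2⟩)⟩ | ⟨ga, e⟩)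
        · cases e; cases e1
          exact Or.inl ⟨rfl, ha⟩
        · cases e; cases e2
          exact Or.inr ⟨Or.inl ⟨rfl, ha⟩, rfl⟩
        · injection e with e1 e2; cases e1; cases e2
          exact Or.inr ⟨Or.inr ⟨ga, rfl⟩, rfl⟩⟩
      hom_inv_id := rfl
      inv_hom_id := rfl }
  leftUnitor G :=
    { hom := ⟨fun x => x.2, by
        rintro ⟨u, g⟩ ⟨u', g'⟩ (⟨e, ha⟩ | ⟨_, e⟩)
        · exact ha
        · cases e; exact G.refl _⟩
      inv := ⟨fun x => (PUnit.unit, x), fun x y h => Or.inl ⟨rfl, h⟩⟩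
      hom_inv_id := rfl
      inv_hom_id := rfl }
  rightUnitor G :=
    { hom := ⟨fun x => x.1, by
        rintro ⟨g, u⟩ ⟨g', u'⟩ (⟨e, _⟩ | ⟨ha, e⟩)
        · cases e; exact G.refl _
        · exact ha⟩
      inv := ⟨fun x => (x, PUnit.unit), fun x y h => Or.inr ⟨h, rfl⟩⟩
      hom_inv_id := rfl
      inv_hom_id := rfl }
  tensorHom_def _ _ := rfl
  id_tensorHom_id _ _ := rfl
  tensorHom_comp_tensorHom _ _ _ _ := rfl
  whiskerLeft_id _ _ := rfl
  id_whiskerRight _ _ := rfl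
  associator_naturality _ _ _ := rfl
  leftUnitor_naturality _ := rfl
  rightUnitor_naturality _ := rfl
  pentagon _ _ _ _ := rfl
  triangle _ _ := rfl

/-- For every directed reflexive graph `G`, the functor `G □ −` admits a right adjoint
(and so does `− □ G`); hence, together with the monoidal structure `(□, J₀)`,
`DiGraph` is a biclosed monoidal category. -/

theorem box_biclosed :
    (∃ M : MonoidalCategory DiGraph, M.tensorObj = boxProd ∧ M.tensorUnit = J0) ∧
    (∀ G : DiGraph,
      (boxBifunctor.obj G).IsLeftAdjoint ∧ (boxBifunctor.flip.obj G).IsLeftAdjoint) := by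
  refine ⟨⟨boxMonoidal, rfl, rfl⟩, fun G => ⟨⟨bhomFunctor G, ⟨boxAdj G⟩⟩, ⟨bhomFunctor G, ⟨boxAdj' G⟩⟩⟩⟩
end

section
/- The categorical product G ⊠ H of directed reflexive graphs, with vertex set G_V × H_V and edges (g,h) ⇝ (g',h') iff (g = g' and h ⇝ h') or (g ⇝ g' and h = h') or (g ⇝ g' and h ⇝ h'), is the categorical product in DiGraph and defines a cartesian closed structure on DiGraph. -/
open CategoryTheory

/-- The first projection `G ⊠ H ⟶ G`. -/
def catFst (G H : DiGraph) : catProd G H ⟶ G :=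
  ⟨fun x => x.1, by
    rintro ⟨g, h⟩ ⟨g', h'⟩ (⟨e, _⟩ | ⟨gadj, _⟩ | ⟨gadj, _⟩)
    · exact (show g = g' from e) ▸ G.refl g
    · exact gadj
    · exact gadj⟩

/-- The second projection `G ⊠ H ⟶ H`. -/
def catSnd (G H : DiGraph) : catProd G H ⟶ H :=
  ⟨fun x => x.2, by
    rintro ⟨g, h⟩ ⟨g', h'⟩ (⟨_, hadj⟩ | ⟨_, e⟩ | ⟨_, hadj⟩)
    · exact hadj
    · exact (show h = h' from e) ▸ H.refl h
    · exact hadj⟩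

/-! Since the relations are reflexive, the first two clauses in the definition of `⊠` are
instances of the third, so `(g, h) ⇝ (g', h')` iff `g ⇝ g'` and `h ⇝ h'`. Products are then
pointwise pairing, and `G ⊠ -` is left adjoint to the graph of morphisms `G ⟶ H` in which
`f ⇝ f'` iff every edge `g ⇝ g'` is sent to an edge `f g ⇝ f' g'`; the adjunction is
currying. -/

open CategoryTheory.Limits

namespace DiGraph

@[ext]
lemma hom_ext {G H : DiGraph} {f f' : G ⟶ H} (h : ∀ x, f.1 x = f'.1 x) : f = f' :=
  Subtype.ext (funext h)

lemma catProd_adj_iff {G H : DiGraph} {x y : (catProd G H).V} :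
    (catProd G H).adj x y ↔ G.adj x.1 y.1 ∧ H.adj x.2 y.2 := by
  obtain ⟨g, h⟩ := x
  obtain ⟨g', h'⟩ := y
  constructor
  · rintro (⟨rfl, hh⟩ | ⟨hg, rfl⟩ | hgh)
    exacts [⟨G.refl g, hh⟩, ⟨hg, H.refl h⟩, hgh]
  · exact fun hgh => Or.inr (Or.inr hgh)

def catLift {K G H : DiGraph} (f : K ⟶ G) (f' : K ⟶ H) : K ⟶ catProd G H :=
  ⟨fun k => (f.1 k, f'.1 k), fun _ _ hk => catProd_adj_iff.2 ⟨f.2 _ _ hk, f'.2 _ _ hk⟩⟩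

def catProdIsLimit (G H : DiGraph) : IsLimit (BinaryFan.mk (catFst G H) (catSnd G H)) :=
  BinaryFan.isLimitMk (fun s => catLift s.fst s.snd) (fun _ => rfl) (fun _ => rfl)
    fun _ _ h₁ h₂ => hom_ext fun k => Prod.ext (congrArg (·.1 k) h₁) (congrArg (·.1 k) h₂)

def internalHom (G H : DiGraph) : DiGraph where
  V := G ⟶ H
  adj f f' := ∀ g g', G.adj g g' → H.adj (f.1 g) (f'.1 g')
  refl f := f.2

def internalHomFunctor (G : DiGraph) : DiGraph ⥤ DiGraph where
  obj := internalHom G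
  map φ := ⟨fun f => f ≫ φ, fun _ _ hf g g' hg => φ.2 _ _ (hf g g' hg)⟩

def catProdHomEquiv (G K H : DiGraph) : (catProd G K ⟶ H) ≃ (K ⟶ internalHom G H) where
  toFun φ :=
    ⟨fun k => ⟨fun g => φ.1 (g, k),
        fun _ _ hg => φ.2 _ _ (catProd_adj_iff.2 ⟨hg, K.refl k⟩)⟩,
      fun _ _ hk _ _ hg => φ.2 _ _ (catProd_adj_iff.2 ⟨hg, hk⟩)⟩
  invFun ψ :=
    ⟨fun x => (ψ.1 x.2).1 x.1, fun _ _ hxy =>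
      ψ.2 _ _ (catProd_adj_iff.1 hxy).2 _ _ (catProd_adj_iff.1 hxy).1⟩
  left_inv _ := rfl
  right_inv _ := rfl

def catProdAdjunction (G : DiGraph) : catBifunctor.obj G ⊣ internalHomFunctor G :=
  Adjunction.mkOfHomEquiv
    { homEquiv := catProdHomEquiv G
      homEquiv_naturality_left_symm := fun _ _ => rfl
      homEquiv_naturality_right := fun _ _ => rfl }

end DiGraph

/-- `G ⊠ H` with the two projections is the categorical product in `DiGraph`, and
tensoring with any `G` via `⊠` admits a right adjoint, so `⊠` makes `DiGraph`
cartesian closed. -/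
theorem catProd_isProduct_and_closed :
    (∀ G H : DiGraph,
      Nonempty (Limits.IsLimit (Limits.BinaryFan.mk (catFst G H) (catSnd G H)))) ∧
    (∀ G : DiGraph, (catBifunctor.obj G).IsLeftAdjoint) := by
  exact ⟨fun G H => ⟨DiGraph.catProdIsLimit G H⟩,
    fun G => (DiGraph.catProdAdjunction G).isLeftAdjoint⟩
end

section
/- Any biclosed monoidal structure on the category DiGraph of directed reflexive graphs must have the one-vertex graph J₀ as its unit object. -/
open CategoryTheory

/-- A monoidal structure on `DiGraph` is biclosed if tensoring on either side with any
object admits a right adjoint. -/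
def Biclosed (M : MonoidalCategory DiGraph) : Prop :=
  ∀ X : DiGraph,
    (@MonoidalCategory.tensorLeft DiGraph _ M X).IsLeftAdjoint ∧
    (@MonoidalCategory.tensorRight DiGraph _ M X).IsLeftAdjoint

open MonoidalCategory

/-- The empty graph. -/
def emptyG : DiGraph := ⟨PEmpty, fun _ _ => True, fun x => x.elim⟩

/-- The empty graph is initial. -/
def fromEmpty (G : DiGraph) : emptyG ⟶ G := ⟨fun x => x.elim, fun x => x.elim⟩

instance : Subsingleton J0.V := inferInstanceAs (Subsingleton PUnit)

/-- The unique map to the terminal object `J₀`. -/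
def toJ0 (G : DiGraph) : G ⟶ J0 := ⟨fun _ => PUnit.unit, fun _ _ _ => trivial⟩

lemma toJ0_unique {G : DiGraph} (f g : G ⟶ J0) : f = g :=
  Subtype.ext (funext fun _ => Subsingleton.elim _ _)

/-- Any biclosed monoidal structure on `DiGraph` has unit (isomorphic to) the
one-vertex graph `J₀`. -/
theorem biclosed_unit_eq_J0 :
    ∀ M : MonoidalCategory DiGraph, Biclosed M → Nonempty (M.tensorUnit ≅ J0) := by
  intro M hM
  letI : MonoidalCategory DiGraph := M
  haveI := (hM J0).2
  -- Step 1: the unit is nonempty.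
  have hne : Nonempty (𝟙_ DiGraph).V := by
    by_contra h
    rw [not_nonempty_iff] at h
    let f : (𝟙_ DiGraph) ⟶ emptyG :=
      ⟨fun x => (h.false x).elim, fun x _ _ => (h.false x).elim⟩
    let adj := Adjunction.ofIsLeftAdjoint (tensorRight J0)
    let m : emptyG ⊗ J0 ⟶ emptyG := (adj.homEquiv emptyG emptyG).symm (fromEmpty _)
    let c : J0 ⟶ emptyG := (λ_ J0).inv ≫ (f ▷ J0) ≫ m
    exact (c.1 PUnit.unit).elim
  obtain ⟨x0⟩ := hne
  -- Step 2: the unit has at most one vertex.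
  have hsub : ∀ x y : (𝟙_ DiGraph).V, x = y := by
    intro x y
    let a : J0 ⟶ 𝟙_ DiGraph := ⟨fun _ => x, fun _ _ _ => (𝟙_ DiGraph).refl x⟩
    let b : J0 ⟶ 𝟙_ DiGraph := ⟨fun _ => y, fun _ _ _ => (𝟙_ DiGraph).refl y⟩
    have key : toJ0 (J0 ⊗ J0) ≫ b = toJ0 (J0 ⊗ J0) ≫ a := by
      have e1 : (a ⊗ₘ b) ≫ (λ_ (𝟙_ DiGraph)).hom
          = ((a ▷ J0) ≫ (λ_ J0).hom) ≫ b := by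
        rw [MonoidalCategory.tensorHom_def, Category.assoc, leftUnitor_naturality, Category.assoc]
      have e2 : (a ⊗ₘ b) ≫ (ρ_ (𝟙_ DiGraph)).hom
          = ((J0 ◁ b) ≫ (ρ_ J0).hom) ≫ a := by
        rw [MonoidalCategory.tensorHom_def', Category.assoc, rightUnitor_naturality, Category.assoc]
      calc toJ0 (J0 ⊗ J0) ≫ b
          = ((a ▷ J0) ≫ (λ_ J0).hom) ≫ b := by
            rw [toJ0_unique (toJ0 _) ((a ▷ J0) ≫ (λ_ J0).hom)]
        _ = (a ⊗ₘ b) ≫ (ρ_ (𝟙_ DiGraph)).hom := by rw [← e1, unitors_equal]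
        _ = ((J0 ◁ b) ≫ (ρ_ J0).hom) ≫ a := e2
        _ = toJ0 (J0 ⊗ J0) ≫ a := by
            rw [toJ0_unique ((J0 ◁ b) ≫ (ρ_ J0).hom) (toJ0 _)]
    -- Produce a vertex of `J0 ⊗ J0` from the vertex `x0` of the unit.
    let p := toJ0 (𝟙_ DiGraph)
    let mm : 𝟙_ DiGraph ⟶ J0 ⊗ J0 := (λ_ (𝟙_ DiGraph)).inv ≫ (p ▷ _) ≫ (J0 ◁ p)
    have h2 := congrArg (fun f : (J0 ⊗ J0 ⟶ 𝟙_ DiGraph) => f.1 (mm.1 x0)) key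
    exact h2.symm
  -- Step 3: build the isomorphism.
  exact ⟨⟨toJ0 _, ⟨fun _ => x0, fun _ _ _ => (𝟙_ DiGraph).refl x0⟩,
    Subtype.ext (funext fun v => hsub _ _),
    Subtype.ext (funext fun v => Subsingleton.elim _ _)⟩⟩
end

section
/- Any biclosed monoidal structure on the category of undirected reflexive graphs must have the one-vertex graph I₀ as its unit object. -/
open CategoryTheory

/-- An undirected reflexive graph: a set with a reflexive, symmetric binary relation
`adj` (`adj x y` means there is an edge `x ∼ y`). -/
structure UGraph where
  V : Type
  adj : V → V → Prop
  refl : ∀ x, adj x x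
  symm : ∀ x y, adj x y → adj y x

/-- Morphisms of undirected reflexive graphs are relation-preserving functions. -/
instance : Category UGraph where
  Hom G H := { f : G.V → H.V // ∀ x y, G.adj x y → H.adj (f x) (f y) }
  id G := ⟨fun x => x, fun _ _ h => h⟩
  comp f g := ⟨fun x => g.1 (f.1 x), fun x y h => g.2 _ _ (f.2 x y h)⟩

/-- `I₀`, the one-vertex graph. -/
def I0 : UGraph := ⟨PUnit, fun _ _ => True, fun _ => trivial, fun _ _ _ => trivial⟩

/-- `I₁`, the graph with two vertices `0 = false`, `1 = true` and an edge `0 − 1`. -/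
def I1 : UGraph := ⟨Bool, fun _ _ => True, fun _ => trivial, fun _ _ _ => trivial⟩

/-- The box product `G □ H` of undirected reflexive graphs. -/
def uboxProd (G H : UGraph) : UGraph where
  V := G.V × H.V
  adj x y := (x.1 = y.1 ∧ H.adj x.2 y.2) ∨ (G.adj x.1 y.1 ∧ x.2 = y.2)
  refl x := Or.inl ⟨rfl, H.refl x.2⟩
  symm x y h := by
    rcases h with ⟨e, hadj⟩ | ⟨gadj, e⟩
    · exact Or.inl ⟨e.symm, H.symm _ _ hadj⟩
    · exact Or.inr ⟨G.symm _ _ gadj, e.symm⟩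

/-- The categorical product `G ⊠ H` of undirected reflexive graphs. -/
def ucatProd (G H : UGraph) : UGraph where
  V := G.V × H.V
  adj x y := (x.1 = y.1 ∧ H.adj x.2 y.2) ∨ (G.adj x.1 y.1 ∧ x.2 = y.2) ∨
    (G.adj x.1 y.1 ∧ H.adj x.2 y.2)
  refl x := Or.inl ⟨rfl, H.refl x.2⟩
  symm x y h := by
    rcases h with ⟨e, hadj⟩ | ⟨gadj, e⟩ | ⟨gadj, hadj⟩
    · exact Or.inl ⟨e.symm, H.symm _ _ hadj⟩
    · exact Or.inr (Or.inl ⟨G.symm _ _ gadj, e.symm⟩)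
    · exact Or.inr (Or.inr ⟨G.symm _ _ gadj, H.symm _ _ hadj⟩)

/-- The box product as a bifunctor. -/
def uboxBifunctor : UGraph ⥤ UGraph ⥤ UGraph where
  obj G :=
    { obj := fun H => uboxProd G H
      map := fun {H K} φ =>
        ⟨fun x => (x.1, φ.1 x.2), by
          rintro ⟨g, h⟩ ⟨g', h'⟩ (⟨e, hadj⟩ | ⟨gadj, e⟩)
          · exact Or.inl ⟨e, φ.2 _ _ hadj⟩
          · exact Or.inr ⟨gadj, congrArg φ.1 e⟩⟩
      map_id := fun H => rfl
      map_comp := fun f g => rfl }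
  map {G G'} ψ :=
    { app := fun H =>
        ⟨fun x => (ψ.1 x.1, x.2), by
          rintro ⟨g, h⟩ ⟨g', h'⟩ (⟨e, hadj⟩ | ⟨gadj, e⟩)
          · exact Or.inl ⟨congrArg ψ.1 e, hadj⟩
          · exact Or.inr ⟨ψ.2 _ _ gadj, e⟩⟩
      naturality := fun H K φ => rfl }
  map_id := fun G => rfl
  map_comp := fun f g => rfl

/-- The categorical product as a bifunctor. -/
def ucatBifunctor : UGraph ⥤ UGraph ⥤ UGraph where
  obj G :=
    { obj := fun H => ucatProd G H
      map := fun {H K} φ =>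
        ⟨fun x => (x.1, φ.1 x.2), by
          rintro ⟨g, h⟩ ⟨g', h'⟩ (⟨e, hadj⟩ | ⟨gadj, e⟩ | ⟨gadj, hadj⟩)
          · exact Or.inl ⟨e, φ.2 _ _ hadj⟩
          · exact Or.inr (Or.inl ⟨gadj, congrArg φ.1 e⟩)
          · exact Or.inr (Or.inr ⟨gadj, φ.2 _ _ hadj⟩)⟩
      map_id := fun H => rfl
      map_comp := fun f g => rfl }
  map {G G'} ψ :=
    { app := fun H =>
        ⟨fun x => (ψ.1 x.1, x.2), by
          rintro ⟨g, h⟩ ⟨g', h'⟩ (⟨e, hadj⟩ | ⟨gadj, e⟩ | ⟨gadj, hadj⟩)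
          · exact Or.inl ⟨congrArg ψ.1 e, hadj⟩
          · exact Or.inr (Or.inl ⟨ψ.2 _ _ gadj, e⟩)
          · exact Or.inr (Or.inr ⟨ψ.2 _ _ gadj, hadj⟩)⟩
      naturality := fun H K φ => rfl }
  map_id := fun G => rfl
  map_comp := fun f g => rfl

/-- A monoidal structure on `UGraph` is biclosed if tensoring on either side with any
object admits a right adjoint. -/
def UBiclosed (M : MonoidalCategory UGraph) : Prop :=
  ∀ X : UGraph,
    (@MonoidalCategory.tensorLeft UGraph _ M X).IsLeftAdjoint ∧
    (@MonoidalCategory.tensorRight UGraph _ M X).IsLeftAdjoint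

namespace UUnitAux

open MonoidalCategory

lemma hom_ext {G H : UGraph} {f g : G ⟶ H} (h : ∀ x, f.1 x = g.1 x) : f = g :=
  Subtype.ext (funext h)

/-- The unique map to the terminal graph `I0`. -/
def bang (G : UGraph) : G ⟶ I0 := ⟨fun _ => PUnit.unit, fun _ _ _ => trivial⟩

lemma to_I0_unique {G : UGraph} (f g : G ⟶ I0) : f = g := hom_ext fun _ => rfl

/-- The map `I0 ⟶ G` picking out a vertex. -/
def vtx {G : UGraph} (x : G.V) : I0 ⟶ G := ⟨fun _ => x, fun _ _ _ => G.refl x⟩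

lemma from_I0_ext {G : UGraph} {f g : I0 ⟶ G}
    (h : f.1 PUnit.unit = g.1 PUnit.unit) : f = g :=
  hom_ext fun x => by cases x; exact h

lemma vtx_inj {G : UGraph} {x y : G.V} (h : (vtx x : I0 ⟶ G) = vtx y) : x = y :=
  congrArg (fun t => t.1 PUnit.unit) h

/-- The empty graph. -/
def OG : UGraph := ⟨Empty, fun _ _ => False, fun x => x.elim, fun x _ _ => x.elim⟩

section

variable [MonoidalCategory UGraph]

lemma recover_u (p : I0 ⟶ (I0 : UGraph) ⊗ I0) (u0 u : (𝟙_ UGraph).V) (b : I1.V) :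
    p ≫ (vtx u ⊗ₘ vtx b) ≫ (𝟙 (𝟙_ UGraph) ⊗ₘ (bang I1 ≫ vtx u0)) ≫ (ρ_ (𝟙_ UGraph)).hom
      = vtx u := by
  have e0 : (vtx b : I0 ⟶ I1) ≫ (bang I1 ≫ vtx u0) = vtx u0 := by
    rw [← Category.assoc, to_I0_unique ((vtx b : I0 ⟶ I1) ≫ bang I1) (𝟙 I0),
      Category.id_comp]
  calc p ≫ (vtx u ⊗ₘ vtx b) ≫ (𝟙 (𝟙_ UGraph) ⊗ₘ (bang I1 ≫ vtx u0)) ≫ (ρ_ (𝟙_ UGraph)).hom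
      = p ≫ (((vtx u : I0 ⟶ 𝟙_ UGraph) ≫ 𝟙 (𝟙_ UGraph)) ⊗ₘ
          ((vtx b : I0 ⟶ I1) ≫ (bang I1 ≫ vtx u0))) ≫ (ρ_ (𝟙_ UGraph)).hom := by
        rw [← tensorHom_comp_tensorHom]; simp [Category.assoc]
    _ = p ≫ ((𝟙 I0 ≫ (vtx u : I0 ⟶ 𝟙_ UGraph)) ⊗ₘ
          ((vtx u0 : I0 ⟶ 𝟙_ UGraph) ≫ 𝟙 (𝟙_ UGraph))) ≫ (ρ_ (𝟙_ UGraph)).hom := by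
        rw [e0, Category.comp_id, Category.id_comp, Category.comp_id]
    _ = p ≫ ((𝟙 I0 ⊗ₘ (vtx u0 : I0 ⟶ 𝟙_ UGraph)) ≫
          ((vtx u : I0 ⟶ 𝟙_ UGraph) ⊗ₘ 𝟙 (𝟙_ UGraph))) ≫ (ρ_ (𝟙_ UGraph)).hom := by
        rw [← tensorHom_comp_tensorHom]
    _ = (p ≫ (𝟙 I0 ⊗ₘ (vtx u0 : I0 ⟶ 𝟙_ UGraph)) ≫ (ρ_ I0).hom) ≫ vtx u := by
        rw [tensorHom_id]
        simp only [Category.assoc, rightUnitor_naturality]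
    _ = 𝟙 I0 ≫ vtx u := by
        rw [to_I0_unique (p ≫ (𝟙 I0 ⊗ₘ (vtx u0 : I0 ⟶ 𝟙_ UGraph)) ≫ (ρ_ I0).hom) (𝟙 I0)]
    _ = vtx u := Category.id_comp _

lemma recover_b (p : I0 ⟶ (I0 : UGraph) ⊗ I0) (u0 u : (𝟙_ UGraph).V) (b : I1.V) :
    p ≫ (vtx u ⊗ₘ vtx b) ≫ ((bang (𝟙_ UGraph) ≫ vtx u0) ⊗ₘ 𝟙 I1) ≫ (λ_ I1).hom
      = vtx b := by
  have e0 : (vtx u : I0 ⟶ 𝟙_ UGraph) ≫ (bang (𝟙_ UGraph) ≫ vtx u0) = vtx u0 := by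
    rw [← Category.assoc, to_I0_unique ((vtx u : I0 ⟶ 𝟙_ UGraph) ≫ bang (𝟙_ UGraph)) (𝟙 I0),
      Category.id_comp]
  calc p ≫ (vtx u ⊗ₘ vtx b) ≫ ((bang (𝟙_ UGraph) ≫ vtx u0) ⊗ₘ 𝟙 I1) ≫ (λ_ I1).hom
      = p ≫ (((vtx u : I0 ⟶ 𝟙_ UGraph) ≫ (bang (𝟙_ UGraph) ≫ vtx u0)) ⊗ₘ
          ((vtx b : I0 ⟶ I1) ≫ 𝟙 I1)) ≫ (λ_ I1).hom := by
        rw [← tensorHom_comp_tensorHom]; simp [Category.assoc]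
    _ = p ≫ (((vtx u0 : I0 ⟶ 𝟙_ UGraph) ≫ 𝟙 (𝟙_ UGraph)) ⊗ₘ
          (𝟙 I0 ≫ (vtx b : I0 ⟶ I1))) ≫ (λ_ I1).hom := by
        rw [e0, Category.comp_id, Category.comp_id, Category.id_comp]
    _ = p ≫ (((vtx u0 : I0 ⟶ 𝟙_ UGraph) ⊗ₘ 𝟙 I0) ≫
          (𝟙 (𝟙_ UGraph) ⊗ₘ (vtx b : I0 ⟶ I1))) ≫ (λ_ I1).hom := by
        rw [← tensorHom_comp_tensorHom]
    _ = (p ≫ ((vtx u0 : I0 ⟶ 𝟙_ UGraph) ⊗ₘ 𝟙 I0) ≫ (λ_ I0).hom) ≫ vtx b := by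
        rw [id_tensorHom]
        simp only [Category.assoc, leftUnitor_naturality]
    _ = 𝟙 I0 ≫ vtx b := by
        rw [to_I0_unique (p ≫ ((vtx u0 : I0 ⟶ 𝟙_ UGraph) ⊗ₘ 𝟙 I0) ≫ (λ_ I0).hom) (𝟙 I0)]
    _ = vtx b := Category.id_comp _

end

end UUnitAux

open UUnitAux MonoidalCategory in
/-- Any biclosed monoidal structure on the category of undirected reflexive graphs has
unit (isomorphic to) the one-vertex graph `I₀`. -/
theorem ubiclosed_unit_eq_I0 :
    ∀ M : MonoidalCategory UGraph, UBiclosed M → Nonempty (M.tensorUnit ≅ I0) := by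
  intro M hM
  letI := M
  -- Step 1: the unit is nonempty.
  have hne : Nonempty (𝟙_ UGraph).V := by
    by_contra h
    obtain ⟨R, ⟨adj⟩⟩ := (hM I1).2.exists_rightAdjoint
    have fvac : (𝟙_ UGraph) ⟶ R.obj OG :=
      ⟨fun x => (h ⟨x⟩).elim, fun x _ _ => (h ⟨x⟩).elim⟩
    have f : (𝟙_ UGraph) ⊗ I1 ⟶ OG := (adj.homEquiv (𝟙_ UGraph) OG).symm fvac
    have g : I1 ⟶ OG := (λ_ I1).inv ≫ f
    exact (g.1 true).elim
  obtain ⟨u0⟩ := hne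
  -- a point of `I0 ⊗ₘ I0`
  have pt0 : I0 ⟶ (I0 : UGraph) ⊗ I0 :=
    vtx u0 ≫ (λ_ (𝟙_ UGraph)).inv ≫ (bang (𝟙_ UGraph) ⊗ₘ bang (𝟙_ UGraph))
  -- Step 2: the injective "vertex pairing" into the two-element vertex set of `U ⊗ₘ I1 ≅ I1`.
  let A : (𝟙_ UGraph).V → Bool → Bool := fun u b =>
    ((pt0 ≫ ((vtx u : I0 ⟶ 𝟙_ UGraph) ⊗ₘ (vtx b : I0 ⟶ I1)) ≫ (λ_ I1).hom)).1 PUnit.unit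
  have inj : ∀ (u u' : (𝟙_ UGraph).V) (b b' : Bool),
      A u b = A u' b' → u = u' ∧ b = b' := by
    intro u u' b b' hA
    have hm : pt0 ≫ ((vtx u : I0 ⟶ 𝟙_ UGraph) ⊗ₘ (vtx b : I0 ⟶ I1)) ≫ (λ_ I1).hom
        = pt0 ≫ ((vtx u' : I0 ⟶ 𝟙_ UGraph) ⊗ₘ (vtx b' : I0 ⟶ I1)) ≫ (λ_ I1).hom :=
      from_I0_ext hA
    have hm2 : pt0 ≫ ((vtx u : I0 ⟶ 𝟙_ UGraph) ⊗ₘ (vtx b : I0 ⟶ I1))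
        = pt0 ≫ ((vtx u' : I0 ⟶ 𝟙_ UGraph) ⊗ₘ (vtx b' : I0 ⟶ I1)) := by
      have h2 := congrArg (fun t => t ≫ (λ_ I1).inv) hm
      simpa [Category.assoc] using h2
    constructor
    · have h3 := congrArg
        (fun t => t ≫ (𝟙 (𝟙_ UGraph) ⊗ₘ (bang I1 ≫ vtx u0)) ≫ (ρ_ (𝟙_ UGraph)).hom) hm2
      simp only [Category.assoc] at h3
      exact vtx_inj ((recover_u pt0 u0 u b).symm.trans (h3.trans (recover_u pt0 u0 u' b')))
    · have h3 := congrArg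
        (fun t => t ≫ ((bang (𝟙_ UGraph) ≫ vtx u0) ⊗ₘ 𝟙 I1) ≫ (λ_ I1).hom) hm2
      simp only [Category.assoc] at h3
      exact vtx_inj ((recover_b pt0 u0 u b).symm.trans (h3.trans (recover_b pt0 u0 u' b')))
  -- Step 3: the unit has at most one vertex.
  have hsub : ∀ u v : (𝟙_ UGraph).V, u = v := by
    intro u v
    by_contra hne'
    have h1 : A u false ≠ A u true := fun h => by simpa using (inj u u false true h).2
    have h2 : A u false ≠ A v false := fun h => hne' ((inj u v false false h).1)
    have h3 : A u true ≠ A v false := fun h => by simpa using (inj u v true false h).2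
    have pigeon : ∀ a b c : Bool, a ≠ b → a ≠ c → b ≠ c → False := by decide
    exact pigeon _ _ _ h1 h2 h3
  -- Step 4: assemble the isomorphism.
  exact ⟨⟨bang (𝟙_ UGraph), vtx u0, hom_ext fun x => (hsub u0 x), hom_ext fun x => rfl⟩⟩
end

section
/- If (DiGraph, ⊗, J₀) is a biclosed monoidal structure on directed reflexive graphs, then the graph J₁ ⊗ J₁ has exactly four vertices. -/
open CategoryTheory

namespace DiGraphAux

open MonoidalCategory Limits

/-- Extensionality for `DiGraph` morphisms. -/
lemma hom_ext {G H : DiGraph} {f g : G ⟶ H} (hfg : ∀ x, f.1 x = g.1 x) : f = g :=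
  Subtype.ext (funext hfg)

/-- The complete graph on `Prop`. -/
def K : DiGraph := ⟨Prop, fun _ _ => True, fun _ => trivial⟩

/-- Any function into `K` is a morphism. -/
def toK {G : DiGraph} (p : G.V → Prop) : G ⟶ K := ⟨p, fun _ _ _ => trivial⟩

lemma surj_of_epi {G H : DiGraph} (f : G ⟶ H) [Epi f] : Function.Surjective f.1 := by
  intro y
  have h1 : f ≫ toK (fun y => ∃ x, f.1 x = y) = f ≫ toK (fun _ => True) := by
    apply hom_ext
    intro x
    exact propext ⟨fun _ => trivial, fun _ => ⟨x, rfl⟩⟩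
  have h2 := (cancel_epi f).mp h1
  have h3 : (∃ x, f.1 x = y) = True := congrFun (congrArg Subtype.val h2) y
  exact of_eq_true h3

lemma epi_of_surj {G H : DiGraph} (f : G ⟶ H) (hs : Function.Surjective f.1) : Epi f :=
  ⟨fun {Z} u v huv => hom_ext fun y => by
    obtain ⟨x, rfl⟩ := hs y
    exact congrFun (congrArg Subtype.val huv) x⟩

/-- The discrete two-point graph. -/
def S : DiGraph := ⟨Bool, Eq, fun _ => rfl⟩

/-- Inclusion of a point into `S`. -/
def j (b : Bool) : J0 ⟶ S := ⟨fun _ => b, fun _ _ _ => rfl⟩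

/-- The vertex-bijective epimorphism `S ⟶ J1`. -/
def q : S ⟶ J1 := ⟨id, fun _ _ hxy => Or.inl hxy⟩

/-- The map `J0 ⟶ J1` selecting vertex `b`. -/
def c (b : Bool) : J0 ⟶ J1 := ⟨fun _ => b, fun _ _ _ => Or.inl rfl⟩

/-- The unique map `J1 ⟶ J0`. -/
def ε : J1 ⟶ J0 := ⟨fun _ => PUnit.unit, fun _ _ _ => trivial⟩

lemma c_comp_ε (b : Bool) : c b ≫ ε = 𝟙 J0 := hom_ext fun _ => rfl

lemma j_comp_q (b : Bool) : j b ≫ q = c b := hom_ext fun _ => rfl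

/-- `S` is the coproduct of two copies of `J0`. -/
def ScofanIsColimit : IsColimit (BinaryCofan.mk (j false) (j true)) := by
  refine BinaryCofan.isColimitMk
    (fun s => ⟨fun b => bif b then s.inr.1 PUnit.unit else s.inl.1 PUnit.unit, ?_⟩)
    (fun s => hom_ext fun _ => rfl) (fun s => hom_ext fun _ => rfl)
    (fun s m h1 h2 => hom_ext fun b => ?_)
  · rintro x y (rfl : x = y)
    cases x
    · exact s.pt.refl _
    · exact s.pt.refl _
  · cases b
    · exact congrFun (congrArg Subtype.val h1) PUnit.unit
    · exact congrFun (congrArg Subtype.val h2) PUnit.unit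

/-- Every vertex of the apex of a colimit cocone over a discrete pair diagram
is in the image of one of the legs. -/
lemma jointly_surj {P : Discrete WalkingPair ⥤ DiGraph} (c : Cocone P) (hc : IsColimit c)
    (x : c.pt.V) : ∃ i a, (c.ι.app i).1 a = x := by
  have h1 : toK (fun x => ∃ i a, (c.ι.app i).1 a = x) = toK (fun _ => True) := by
    apply hc.hom_ext
    intro i
    apply hom_ext
    intro a
    exact propext ⟨fun _ => trivial, fun _ => ⟨i, a, rfl⟩⟩
  have h3 : (∃ i a, (c.ι.app i).1 a = x) = True := congrFun (congrArg Subtype.val h1) x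
  exact of_eq_true h3

theorem main [M : MonoidalCategory DiGraph] (hB : Biclosed M) (h : M.tensorUnit = J0) :
    Nat.card (M.tensorObj J1 J1).V = 4 := by
  haveI : (tensorRight J1).IsLeftAdjoint := (hB J1).2
  haveI : PreservesColimitsOfSize.{0, 0} (tensorRight J1) :=
    (Adjunction.ofIsLeftAdjoint (tensorRight J1)).leftAdjoint_preservesColimits
  have h' : (𝟙_ DiGraph) = J0 := h
  -- the canonical iso `J1 ≅ J0 ⊗ J1`
  set ψ : J1 ⟶ M.tensorObj J0 J1 := (λ_ J1).inv ≫ (eqToHom h' ▷ J1) with hψ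
  haveI : IsIso ψ := by
    haveI : IsIso (eqToHom h' ▷ J1) := by
      show IsIso ((tensorRight J1).map (eqToHom h'))
      infer_instance
    exact IsIso.comp_isIso
  -- the four "corner" maps
  set ι : Bool → (J1 ⟶ M.tensorObj J1 J1) := fun b => ψ ≫ (c b ▷ J1) with hι
  -- the two projections
  set ℓh : M.tensorObj J1 J1 ⟶ J1 := ((ε ≫ eqToHom h'.symm) ▷ J1) ≫ (λ_ J1).hom with hℓh
  set ℓv : M.tensorObj J1 J1 ⟶ J1 := (J1 ◁ (ε ≫ eqToHom h'.symm)) ≫ (ρ_ J1).hom with hℓv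
  have e0 : ∀ b, eqToHom h' ≫ c b ≫ ε ≫ eqToHom h'.symm = 𝟙 (𝟙_ DiGraph) := by
    intro b
    rw [show c b ≫ ε ≫ eqToHom h'.symm = eqToHom h'.symm by
      rw [← Category.assoc, c_comp_ε, Category.id_comp], eqToHom_trans, eqToHom_refl]
  have hcomp_h : ∀ b, ι b ≫ ℓh = 𝟙 J1 := by
    intro b
    calc ι b ≫ ℓh
        = (λ_ J1).inv ≫ (eqToHom h' ≫ c b ≫ ε ≫ eqToHom h'.symm) ▷ J1 ≫ (λ_ J1).hom := by
          rw [hι, hℓh, hψ]; simp only [comp_whiskerRight, Category.assoc]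
      _ = 𝟙 J1 := by rw [e0]; simp
  have hcomp_v : ∀ b, ι b ≫ ℓv = (ε ≫ eqToHom h'.symm) ≫ (eqToHom h' ≫ c b) := by
    intro b
    have hex := whisker_exchange (C := DiGraph) (eqToHom h' ≫ c b) (ε ≫ eqToHom h'.symm)
    calc ι b ≫ ℓv
        = (λ_ J1).inv ≫ ((eqToHom h' ≫ c b) ▷ J1 ≫ J1 ◁ (ε ≫ eqToHom h'.symm)) ≫ (ρ_ J1).hom := by
          rw [hι, hℓv, hψ]; simp only [comp_whiskerRight, Category.assoc]
      _ = (λ_ J1).inv ≫ ((𝟙_ DiGraph) ◁ (ε ≫ eqToHom h'.symm) ≫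
            (eqToHom h' ≫ c b) ▷ (𝟙_ DiGraph)) ≫ (ρ_ J1).hom := by
          rw [← hex]
      _ = (ε ≫ eqToHom h'.symm) ≫ (eqToHom h' ≫ c b) := by
          rw [MonoidalCategory.id_whiskerLeft, MonoidalCategory.whiskerRight_id]
          simp [← unitors_equal]
  -- the vertex maps
  set Ψ : Bool × Bool → (M.tensorObj J1 J1).V := fun p => (ι p.1).1 p.2 with hΨ
  have hΦΨ : ∀ p : Bool × Bool, (ℓv.1 (Ψ p), ℓh.1 (Ψ p)) = p := by
    rintro ⟨b, b'⟩
    have e1 : ℓh.1 (Ψ (b, b')) = b' := congrFun (congrArg Subtype.val (hcomp_h b)) b'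
    have e2 : ℓv.1 (Ψ (b, b')) = b := congrFun (congrArg Subtype.val (hcomp_v b)) b'
    rw [e1, e2]
    rfl
  -- surjectivity of Ψ
  have key : ∀ (b : Bool) (a' : (M.tensorObj J0 J1).V),
      ∃ p, Ψ p = ((tensorRight J1).map q).1 (((j b) ▷ J1).1 a') := by
    intro b a'
    obtain ⟨b', rfl⟩ : ∃ b', ψ.1 b' = a' :=
      ⟨(inv ψ).1 a', congrFun (congrArg Subtype.val (IsIso.inv_hom_id ψ)) a'⟩
    refine ⟨(b, b'), ?_⟩
    have e3 : (j b ▷ J1) ≫ (q ▷ J1) = c b ▷ J1 := by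
      rw [← comp_whiskerRight, j_comp_q]
    show (c b ▷ J1).1 (ψ.1 b') = ((tensorRight J1).map q).1 ((j b ▷ J1).1 (ψ.1 b'))
    show (c b ▷ J1).1 (ψ.1 b') = (q ▷ J1).1 ((j b ▷ J1).1 (ψ.1 b'))
    show (c b ▷ J1).1 (ψ.1 b') = ((j b ▷ J1) ≫ (q ▷ J1)).1 (ψ.1 b')
    rw [e3]
  have hsurj : Function.Surjective Ψ := by
    intro x
    haveI : Epi q := epi_of_surj q (fun y => ⟨y, rfl⟩)
    haveI : Epi ((tensorRight J1).map q) := (tensorRight J1).map_epi q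
    obtain ⟨s, rfl⟩ := surj_of_epi ((tensorRight J1).map q) x
    obtain ⟨i, a, rfl⟩ := jointly_surj _
      (isColimitOfPreserves (tensorRight J1) ScofanIsColimit) s
    rcases i with ⟨_ | _⟩
    · exact key false a
    · exact key true a
  have hinj : Function.Injective Ψ := by
    intro p p' hpp'
    have h4 := hΦΨ p
    rw [hpp', hΦΨ p'] at h4
    exact h4.symm
  have h5 : Nat.card (M.tensorObj J1 J1).V = Nat.card (Bool × Bool) :=
    Nat.card_congr (Equiv.ofBijective Ψ ⟨hinj, hsurj⟩).symm
  rw [h5]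
  simp [Nat.card_eq_fintype_card]

end DiGraphAux

/-- If `(DiGraph, ⊗, J₀)` is a biclosed monoidal structure, then `J₁ ⊗ J₁` has
exactly four vertices. -/
theorem tensor_J1_J1_four_vertices :
    ∀ M : MonoidalCategory DiGraph, Biclosed M → M.tensorUnit = J0 →
      Nat.card (M.tensorObj J1 J1).V = 4 := by
  intro M hB h
  exact @DiGraphAux.main M hB h
end

section
/- If (DiGraph, ⊗, J₀) is a biclosed monoidal structure on directed reflexive graphs, then J₁ ⊗ J₁ contains the commutative square digraph C_Sq (four vertices a, b, c, d with edges a ⇝ b, a ⇝ c, b ⇝ d, c ⇝ d) as a subgraph. -/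
open CategoryTheory

/-- If `(DiGraph, ⊗, J₀)` is a biclosed monoidal structure, then `J₁ ⊗ J₁` contains the
commutative square `C_Sq` as a subgraph: there are four distinct vertices `a, b, c, d`
with edges `a ⇝ b`, `a ⇝ c`, `b ⇝ d`, `c ⇝ d`. -/
theorem tensor_J1_J1_contains_square :
    ∀ M : MonoidalCategory DiGraph, Biclosed M → M.tensorUnit = J0 →
      ∃ a b c d : (M.tensorObj J1 J1).V,
        a ≠ b ∧ a ≠ c ∧ a ≠ d ∧ b ≠ c ∧ b ≠ d ∧ c ≠ d ∧
        (M.tensorObj J1 J1).adj a b ∧ (M.tensorObj J1 J1).adj a c ∧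
        (M.tensorObj J1 J1).adj b d ∧ (M.tensorObj J1 J1).adj c d := by
  intro M _hB hU
  letI : MonoidalCategory DiGraph := M
  open MonoidalCategory in
  -- the unique point of the unit object
  let u : J0 ⟶ 𝟙_ DiGraph := eqToHom hU.symm
  let u0 : (𝟙_ DiGraph).V := u.1 PUnit.unit
  -- vertex morphisms of J1
  let vw : Bool → (𝟙_ DiGraph ⟶ J1) := fun w =>
    eqToHom hU ≫ ⟨fun _ => w, fun _ _ _ => Or.inl rfl⟩
  -- unique map to J0
  let t : J1 ⟶ J0 := ⟨fun _ => PUnit.unit, fun _ _ _ => trivial⟩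
  have hvt : ∀ w : Bool, vw w ≫ t ≫ u = 𝟙 (𝟙_ DiGraph) := by
    intro w
    have h1 : ((⟨fun _ => w, fun _ _ _ => Or.inl rfl⟩ : J0 ⟶ J1) ≫ t) = 𝟙 J0 :=
      Subtype.ext (funext fun x => rfl)
    have h2 : vw w ≫ t ≫ u =
        eqToHom hU ≫ ((⟨fun _ => w, fun _ _ _ => Or.inl rfl⟩ : J0 ⟶ J1) ≫ t) ≫
          eqToHom hU.symm := rfl
    rw [h2, h1, Category.id_comp]
    simp
  -- evaluation of vertex morphisms at the unit point
  have hvu : ∀ w : Bool, (vw w).1 u0 = w := by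
    intro w
    have h2 : eqToHom hU.symm ≫ eqToHom hU = 𝟙 J0 := by simp
    have h3 := congrFun (congrArg Subtype.val h2) PUnit.unit
    show (⟨fun _ => w, fun _ _ _ => Or.inl rfl⟩ : J0 ⟶ J1).1 ((eqToHom hU).1 (u.1 PUnit.unit))
        = w
    rfl
  -- the canonical vertex morphisms of J1 ⊗ J1
  let Vm : Bool → Bool → (𝟙_ DiGraph ⟶ J1 ⊗ J1) := fun v w =>
    (λ_ (𝟙_ DiGraph)).inv ≫ (vw v ⊗ₘ vw w)
  let P : Bool → Bool → (J1 ⊗ J1).V := fun v w => (Vm v w).1 u0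
  -- horizontal edges
  let e : Bool → (J1 ⟶ J1 ⊗ J1) := fun w => (ρ_ J1).inv ≫ (J1 ◁ vw w)
  -- vertical edges
  let f : Bool → (J1 ⟶ J1 ⊗ J1) := fun v => (λ_ J1).inv ≫ (vw v ▷ J1)
  have claim1 : ∀ x w : Bool, vw x ≫ e w = Vm x w := by
    intro x w
    have h4 := rightUnitor_inv_naturality (vw x)
    show vw x ≫ (ρ_ J1).inv ≫ (J1 ◁ vw w) = (λ_ (𝟙_ DiGraph)).inv ≫ (vw x ⊗ₘ vw w)
    rw [← Category.assoc, h4, Category.assoc, ← MonoidalCategory.tensorHom_def, unitors_inv_equal]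
  have claim2 : ∀ v y : Bool, vw y ≫ f v = Vm v y := by
    intro v y
    have h4 := leftUnitor_inv_naturality (vw y)
    show vw y ≫ (λ_ J1).inv ≫ (vw v ▷ J1) = (λ_ (𝟙_ DiGraph)).inv ≫ (vw v ⊗ₘ vw y)
    rw [← Category.assoc, h4, Category.assoc, ← tensorHom_def']
  -- projections
  let pr1 : (J1 ⊗ J1) ⟶ J1 := (J1 ◁ (t ≫ u)) ≫ (ρ_ J1).hom
  let pr2 : (J1 ⊗ J1) ⟶ J1 := ((t ≫ u) ▷ J1) ≫ (λ_ J1).hom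
  have hpr1 : ∀ v w : Bool, Vm v w ≫ pr1 = vw v := by
    intro v w
    show ((λ_ (𝟙_ DiGraph)).inv ≫ (vw v ⊗ₘ vw w)) ≫ (J1 ◁ (t ≫ u)) ≫ (ρ_ J1).hom = vw v
    have h5 : (vw v ⊗ₘ vw w) ≫ (J1 ◁ (t ≫ u)) = vw v ▷ 𝟙_ DiGraph := by
      rw [← id_tensorHom, tensorHom_comp_tensorHom, Category.comp_id, hvt, ← tensorHom_id]
    rw [Category.assoc, ← Category.assoc (vw v ⊗ₘ vw w), h5, rightUnitor_naturality,
      ← Category.assoc, unitors_inv_equal, Iso.inv_hom_id, Category.id_comp]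
  have hpr2 : ∀ v w : Bool, Vm v w ≫ pr2 = vw w := by
    intro v w
    show ((λ_ (𝟙_ DiGraph)).inv ≫ (vw v ⊗ₘ vw w)) ≫ ((t ≫ u) ▷ J1) ≫ (λ_ J1).hom = vw w
    have h5 : (vw v ⊗ₘ vw w) ≫ ((t ≫ u) ▷ J1) = 𝟙_ DiGraph ◁ vw w := by
      rw [← tensorHom_id, tensorHom_comp_tensorHom, Category.comp_id, hvt, ← id_tensorHom]
    rw [Category.assoc, ← Category.assoc (vw v ⊗ₘ vw w), h5, leftUnitor_naturality,
      ← Category.assoc, Iso.inv_hom_id, Category.id_comp]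
  -- projections separate the vertices
  have hsep : ∀ v w v' w' : Bool, P v w = P v' w' → v = v' ∧ w = w' := by
    intro v w v' w' h
    constructor
    · have h1 := congrFun (congrArg Subtype.val (hpr1 v w)) u0
      have h2 := congrFun (congrArg Subtype.val (hpr1 v' w')) u0
      rw [hvu v] at h1; rw [hvu v'] at h2
      exact h1.symm.trans ((congrArg pr1.1 h).trans h2)
    · have h1 := congrFun (congrArg Subtype.val (hpr2 v w)) u0
      have h2 := congrFun (congrArg Subtype.val (hpr2 v' w')) u0
      rw [hvu w] at h1; rw [hvu w'] at h2
      exact h1.symm.trans ((congrArg pr2.1 h).trans h2)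
  -- edge endpoints
  have he : ∀ x w : Bool, (e w).1 x = P x w := by
    intro x w
    have h1 := congrFun (congrArg Subtype.val (claim1 x w)) u0
    rw [show (vw x ≫ e w).1 u0 = (e w).1 ((vw x).1 u0) from rfl, hvu x] at h1
    exact h1
  have hf : ∀ v y : Bool, (f v).1 y = P v y := by
    intro v y
    have h1 := congrFun (congrArg Subtype.val (claim2 v y)) u0
    rw [show (vw y ≫ f v).1 u0 = (f v).1 ((vw y).1 u0) from rfl, hvu y] at h1
    exact h1
  -- adjacency from the edge morphisms
  have edgeJ1 : J1.adj false true := Or.inr ⟨rfl, rfl⟩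
  have hadj_e : ∀ w : Bool, (J1 ⊗ J1).adj (P false w) (P true w) := by
    intro w
    have := (e w).2 false true edgeJ1
    rwa [he false w, he true w] at this
  have hadj_f : ∀ v : Bool, (J1 ⊗ J1).adj (P v false) (P v true) := by
    intro v
    have := (f v).2 false true edgeJ1
    rwa [hf v false, hf v true] at this
  refine ⟨P false false, P true false, P false true, P true true,
    ?_, ?_, ?_, ?_, ?_, ?_, hadj_e false, hadj_f false, hadj_f true, hadj_e true⟩
  · intro h; exact absurd (hsep _ _ _ _ h).1 (by simp)
  · intro h; exact absurd (hsep _ _ _ _ h).2 (by simp)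
  · intro h; exact absurd (hsep _ _ _ _ h).1 (by simp)
  · intro h; exact absurd (hsep _ _ _ _ h).1 (by simp)
  · intro h; exact absurd (hsep _ _ _ _ h).2 (by simp)
  · intro h; exact absurd (hsep _ _ _ _ h).1 (by simp)
end

section
/- Up to monoidal isomorphism, the only biclosed monoidal structures on the category of directed reflexive graphs are the box product □ and the categorical product ⊠ (both with unit the one-vertex graph J₀). -/
open CategoryTheory

namespace DGProof
open CategoryTheory.Limits CategoryTheory.MonoidalCategory

lemma hom_ext {G H : DiGraph} {f g : G ⟶ H} (h : ∀ v, f.1 v = g.1 v) : f = g :=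
  Subtype.ext (funext h)

instance : Subsingleton J0.V := inferInstanceAs (Subsingleton PUnit)
instance : Subsingleton (boxProd J0 J0).V := inferInstanceAs (Subsingleton (PUnit × PUnit))
instance : Subsingleton (catProd J0 J0).V := inferInstanceAs (Subsingleton (PUnit × PUnit))
theorem subsingleton_boxProd_J1_J0_true : Subsingleton (boxProd J1 J0).V → True := fun _ => trivial

def vhat {G : DiGraph} (v : G.V) : J0 ⟶ G := ⟨fun _ => v, fun _ _ _ => G.refl v⟩

def δ (i : Bool) : J0 ⟶ J1 := vhat i

def bang (G : DiGraph) : G ⟶ J0 := ⟨fun _ => PUnit.unit, fun _ _ _ => trivial⟩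

lemma hom_to_J0 {G : DiGraph} (f g : G ⟶ J0) : f = g := hom_ext (fun _ => rfl)

def Edge (G : DiGraph) : Type := {p : G.V × G.V // G.adj p.1 p.2}

/-- The endpoint of an edge (`false` = source, `true` = target). -/
def ept {G : DiGraph} (e : Edge G) (i : Bool) : G.V := if i then e.1.2 else e.1.1

def ehat {G : DiGraph} (e : Edge G) : J1 ⟶ G :=
  ⟨fun i => ept e i, by
    rintro x y (h | ⟨hx, hy⟩)
    · subst h; exact G.refl _
    · subst hx; subst hy; simpa [ept] using e.2⟩

lemma mkIso {G H : DiGraph} (f : G ⟶ H) (hb : Function.Bijective f.1)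
    (hr : ∀ x y, H.adj (f.1 x) (f.1 y) → G.adj x y) : CategoryTheory.IsIso f := by
  let e := Equiv.ofBijective f.1 hb
  refine ⟨⟨⟨e.symm, fun x y hxy => hr _ _ ?_⟩, hom_ext fun v => e.symm_apply_apply v,
    hom_ext fun v => e.apply_symm_apply v⟩⟩
  have h1 : f.1 (e.symm x) = x := e.apply_symm_apply x
  have h2 : f.1 (e.symm y) = y := e.apply_symm_apply y
  rw [h1, h2]; exact hxy

def isoEquiv {G H : DiGraph} (i : G ≅ H) : G.V ≃ H.V :=
  ⟨i.hom.1, i.inv.1, fun v => congrArg (fun (m : G ⟶ G) => m.1 v) i.hom_inv_id,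
    fun v => congrArg (fun (m : H ⟶ H) => m.1 v) i.inv_hom_id⟩

/-! ## The canonical presentation of a digraph as a colimit of `J0`s and `J1`s -/

inductive ElObj (G : DiGraph) : Type
  | vert : G.V → ElObj G
  | edge : Edge G → ElObj G

open ElObj

def elHom {G : DiGraph} : ElObj G → ElObj G → Type
  | vert v, vert w => PLift (v = w)
  | vert v, edge e => {i : Bool // ept e i = v}
  | edge e, edge e' => PLift (e = e')
  | edge _, vert _ => PEmpty

instance elCat (G : DiGraph) : CategoryTheory.Category (ElObj G) where
  Hom := elHom
  id a := match a with
    | vert _ => PLift.up rfl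
    | edge _ => PLift.up rfl
  comp {a b c} f g := match a, b, c, f, g with
    | vert _, vert _, vert _, f, g => PLift.up (f.down.trans g.down)
    | vert _, vert _, edge _, f, g => ⟨g.1, g.2.trans f.down.symm⟩
    | vert _, edge _, edge _, f, g => ⟨f.1, by rw [← g.down]; exact f.2⟩
    | vert _, edge _, vert _, _, g => g.elim
    | edge _, vert _, _, f, _ => f.elim
    | edge _, edge _, vert _, _, g => g.elim
    | edge _, edge _, edge _, f, g => PLift.up (f.down.trans g.down)
  id_comp := by
    rintro (v|e) (w|e') f
    · rfl
    · exact Subtype.ext rfl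
    · exact f.elim
    · rfl
  comp_id := by
    rintro (v|e) (w|e') f
    · rfl
    · exact Subtype.ext rfl
    · exact f.elim
    · rfl
  assoc := by
    rintro (a|a) (b|b) (c|c) (d|d) f g h <;>
      first
        | exact f.elim
        | exact g.elim
        | exact h.elim
        | rfl
        | exact Subtype.ext rfl

def elDiagram (G : DiGraph) : CategoryTheory.Functor (ElObj G) DiGraph where
  obj a := match a with
    | vert _ => J0
    | edge _ => J1
  map {a b} f := match a, b, f with
    | vert _, vert _, _ => CategoryTheory.CategoryStruct.id J0
    | vert _, edge _, f => δ f.1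
    | edge _, edge _, _ => CategoryTheory.CategoryStruct.id J1
    | edge _, vert _, f => f.elim
  map_id := by rintro (v|e) <;> rfl
  map_comp := by
    rintro (a|a) (b|b) (c|c) f g <;>
      first
        | exact f.elim
        | exact g.elim
        | rfl
        | exact hom_ext fun _ => rfl

def elCocone (G : DiGraph) : Cocone (elDiagram G) where
  pt := G
  ι := {
    app := fun a => match a with
      | vert v => vhat v
      | edge e => ehat e
    naturality := by
      rintro (a|a) (b|b) f
      · have hf : a = b := PLift.down f
        subst hf; rfl
      · exact hom_ext fun u => f.2
      · exact f.elim
      · have hf : a = b := PLift.down f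
        subst hf; rfl }

def elIsColimit (G : DiGraph) : IsColimit (elCocone G) where
  desc s := ⟨fun v => (s.ι.app (vert v)).1 PUnit.unit, by
    intro x y hadj
    have h0 := congrArg (fun (m : J0 ⟶ s.pt) => m.1 PUnit.unit)
      (s.w (show vert x ⟶ edge ⟨(x,y),hadj⟩ from ⟨false, rfl⟩))
    have h1 := congrArg (fun (m : J0 ⟶ s.pt) => m.1 PUnit.unit)
      (s.w (show vert y ⟶ edge ⟨(x,y),hadj⟩ from ⟨true, rfl⟩))
    refine cast (congrArg₂ s.pt.adj h0 h1) ?_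
    exact (s.ι.app (edge ⟨(x,y),hadj⟩)).2 false true (Or.inr ⟨rfl, rfl⟩)⟩
  fac s := by
    rintro (v|e)
    · exact hom_ext fun u => rfl
    · apply hom_ext; intro i
      exact (congrArg (fun (m : J0 ⟶ s.pt) => m.1 PUnit.unit)
        (s.w (show vert (ept e i) ⟶ edge e from ⟨i, rfl⟩))).symm
  uniq s m hm := by
    apply hom_ext; intro v
    exact congrArg (fun (m' : J0 ⟶ s.pt) => m'.1 PUnit.unit) (hm (vert v))

end DGProof
namespace DGProof
open CategoryTheory.Limits CategoryTheory CategoryTheory.MonoidalCategory ElObj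

section Pres

variable (K G : DiGraph)

/-- `K □ -` maps the canonical presentation cocone of `G` to a colimit cocone. -/
def boxLeftPres : IsColimit ((boxBifunctor.obj K).mapCocone (elCocone G)) where
  desc s := ⟨fun p => (s.ι.app (vert p.2)).1 (p.1, PUnit.unit), by
    rintro ⟨k, g⟩ ⟨k', g'⟩ (⟨hk, hadj⟩ | ⟨hadj, hg⟩)
    · dsimp only at hk; subst hk
      have h0 := congrArg (fun (m : boxProd K J0 ⟶ s.pt) => m.1 (k, PUnit.unit))
        (s.w (show vert g ⟶ edge ⟨(g,g'),hadj⟩ from ⟨false, rfl⟩))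
      have h1 := congrArg (fun (m : boxProd K J0 ⟶ s.pt) => m.1 (k, PUnit.unit))
        (s.w (show vert g' ⟶ edge ⟨(g,g'),hadj⟩ from ⟨true, rfl⟩))
      refine cast (congrArg₂ s.pt.adj h0 h1) ?_
      exact (s.ι.app (edge ⟨(g,g'),hadj⟩)).2 (k, false) (k, true)
        (Or.inl ⟨rfl, Or.inr ⟨rfl, rfl⟩⟩)
    · dsimp only at hg; subst hg
      exact (s.ι.app (vert g)).2 (k, PUnit.unit) (k', PUnit.unit) (Or.inr ⟨hadj, rfl⟩)⟩
  fac s := by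
    rintro (v|e)
    · exact hom_ext fun p => rfl
    · apply hom_ext; rintro ⟨k, i⟩
      exact (congrArg (fun (m : boxProd K J0 ⟶ s.pt) => m.1 (k, PUnit.unit))
        (s.w (show vert (ept e i) ⟶ edge e from ⟨i, rfl⟩))).symm
  uniq s m hm := by
    apply hom_ext; rintro ⟨k, v⟩
    exact congrArg (fun (m' : boxProd K J0 ⟶ s.pt) => m'.1 (k, PUnit.unit)) (hm (vert v))

/-- `- □ K` maps the canonical presentation cocone of `G` to a colimit cocone. -/
def boxRightPres : IsColimit ((boxBifunctor.flip.obj K).mapCocone (elCocone G)) where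
  desc s := ⟨fun p => (s.ι.app (vert p.1)).1 (PUnit.unit, p.2), by
    rintro ⟨g, k⟩ ⟨g', k'⟩ (⟨hg, hadj⟩ | ⟨hadj, hk⟩)
    · dsimp only at hg; subst hg
      exact (s.ι.app (vert g)).2 (PUnit.unit, k) (PUnit.unit, k') (Or.inl ⟨rfl, hadj⟩)
    · dsimp only at hk; subst hk
      have h0 := congrArg (fun (m : boxProd J0 K ⟶ s.pt) => m.1 (PUnit.unit, k))
        (s.w (show vert g ⟶ edge ⟨(g,g'),hadj⟩ from ⟨false, rfl⟩))
      have h1 := congrArg (fun (m : boxProd J0 K ⟶ s.pt) => m.1 (PUnit.unit, k))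
        (s.w (show vert g' ⟶ edge ⟨(g,g'),hadj⟩ from ⟨true, rfl⟩))
      refine cast (congrArg₂ s.pt.adj h0 h1) ?_
      exact (s.ι.app (edge ⟨(g,g'),hadj⟩)).2 (false, k) (true, k)
        (Or.inr ⟨Or.inr ⟨rfl, rfl⟩, rfl⟩)⟩
  fac s := by
    rintro (v|e)
    · exact hom_ext fun p => rfl
    · apply hom_ext; rintro ⟨i, k⟩
      exact (congrArg (fun (m : boxProd J0 K ⟶ s.pt) => m.1 (PUnit.unit, k))
        (s.w (show vert (ept e i) ⟶ edge e from ⟨i, rfl⟩))).symm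
  uniq s m hm := by
    apply hom_ext; rintro ⟨v, k⟩
    exact congrArg (fun (m' : boxProd J0 K ⟶ s.pt) => m'.1 (PUnit.unit, k)) (hm (vert v))

lemma catProd_adj_iff {A B : DiGraph} {p q : (catProd A B).V} :
    (catProd A B).adj p q ↔ A.adj p.1 q.1 ∧ B.adj p.2 q.2 := by
  constructor
  · rintro (⟨h1, h2⟩ | ⟨h1, h2⟩ | ⟨h1, h2⟩)
    · exact ⟨h1 ▸ A.refl _, h2⟩
    · exact ⟨h1, h2 ▸ B.refl _⟩
    · exact ⟨h1, h2⟩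
  · rintro ⟨h1, h2⟩
    exact Or.inr (Or.inr ⟨h1, h2⟩)

/-- `K ⊠ -` maps the canonical presentation cocone of `G` to a colimit cocone. -/
def catLeftPres : IsColimit ((catBifunctor.obj K).mapCocone (elCocone G)) where
  desc s := ⟨fun p => (s.ι.app (vert p.2)).1 (p.1, PUnit.unit), by
    rintro ⟨k, g⟩ ⟨k', g'⟩ h
    obtain ⟨hk, hg⟩ := catProd_adj_iff.mp h
    have h0 := congrArg (fun (m : catProd K J0 ⟶ s.pt) => m.1 (k, PUnit.unit))
      (s.w (show vert g ⟶ edge ⟨(g,g'),hg⟩ from ⟨false, rfl⟩))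
    have h1 := congrArg (fun (m : catProd K J0 ⟶ s.pt) => m.1 (k', PUnit.unit))
      (s.w (show vert g' ⟶ edge ⟨(g,g'),hg⟩ from ⟨true, rfl⟩))
    refine cast (congrArg₂ s.pt.adj h0 h1) ?_
    exact (s.ι.app (edge ⟨(g,g'),hg⟩)).2 (k, false) (k', true)
      (Or.inr (Or.inr ⟨hk, Or.inr ⟨rfl, rfl⟩⟩))⟩
  fac s := by
    rintro (v|e)
    · exact hom_ext fun p => rfl
    · apply hom_ext; rintro ⟨k, i⟩
      exact (congrArg (fun (m : catProd K J0 ⟶ s.pt) => m.1 (k, PUnit.unit))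
        (s.w (show vert (ept e i) ⟶ edge e from ⟨i, rfl⟩))).symm
  uniq s m hm := by
    apply hom_ext; rintro ⟨k, v⟩
    exact congrArg (fun (m' : catProd K J0 ⟶ s.pt) => m'.1 (k, PUnit.unit)) (hm (vert v))

/-- `- ⊠ K` maps the canonical presentation cocone of `G` to a colimit cocone. -/
def catRightPres : IsColimit ((catBifunctor.flip.obj K).mapCocone (elCocone G)) where
  desc s := ⟨fun p => (s.ι.app (vert p.1)).1 (PUnit.unit, p.2), by
    rintro ⟨g, k⟩ ⟨g', k'⟩ h
    obtain ⟨hg, hk⟩ := catProd_adj_iff.mp h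
    have h0 := congrArg (fun (m : catProd J0 K ⟶ s.pt) => m.1 (PUnit.unit, k))
      (s.w (show vert g ⟶ edge ⟨(g,g'),hg⟩ from ⟨false, rfl⟩))
    have h1 := congrArg (fun (m : catProd J0 K ⟶ s.pt) => m.1 (PUnit.unit, k'))
      (s.w (show vert g' ⟶ edge ⟨(g,g'),hg⟩ from ⟨true, rfl⟩))
    refine cast (congrArg₂ s.pt.adj h0 h1) ?_
    exact (s.ι.app (edge ⟨(g,g'),hg⟩)).2 (false, k) (true, k')
      (Or.inr (Or.inr ⟨Or.inr ⟨rfl, rfl⟩, hk⟩))⟩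
  fac s := by
    rintro (v|e)
    · exact hom_ext fun p => rfl
    · apply hom_ext; rintro ⟨i, k⟩
      exact (congrArg (fun (m : catProd J0 K ⟶ s.pt) => m.1 (PUnit.unit, k))
        (s.w (show vert (ept e i) ⟶ edge e from ⟨i, rfl⟩))).symm
  uniq s m hm := by
    apply hom_ext; rintro ⟨v, k⟩
    exact congrArg (fun (m' : catProd J0 K ⟶ s.pt) => m'.1 (PUnit.unit, k)) (hm (vert v))

end Pres

/-- The comparison lemma: a natural transformation between two functors both sending the
canonical presentation cocone of `G` to colimit cocones, which is iso at `J0` and `J1`,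
is iso at `G`. -/
lemma key {F₁ F₂ : DiGraph ⥤ DiGraph} (η : F₁ ⟶ F₂) (G : DiGraph)
    (h₁ : IsColimit (F₁.mapCocone (elCocone G))) (h₂ : IsColimit (F₂.mapCocone (elCocone G)))
    (i0 : IsIso (η.app J0)) (i1 : IsIso (η.app J1)) : IsIso (η.app G) := by
  let α := Functor.whiskerLeft (elDiagram G) η
  haveI : ∀ j, IsIso (α.app j) := by rintro (v|e); exacts [i0, i1]
  haveI : IsIso α := NatIso.isIso_of_isIso_app α
  have heq : η.app G = (IsColimit.coconePointsIsoOfNatIso h₁ h₂ (asIso α)).hom := by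
    apply h₁.hom_ext
    intro j
    exact (η.naturality ((elCocone G).ι.app j)).trans
      (IsColimit.comp_coconePointsIsoOfNatIso_hom h₁ h₂ (asIso α) j).symm
  rw [heq]
  exact (IsColimit.coconePointsIsoOfNatIso h₁ h₂ (asIso α)).isIso_hom

end DGProof
namespace DGProof
open CategoryTheory.Limits CategoryTheory CategoryTheory.MonoidalCategory ElObj

section Monoidal
variable [M : MonoidalCategory DiGraph]

/-- The complete graph on `Bool`. -/
def KBool : DiGraph := ⟨Bool, fun _ _ => True, fun _ => trivial⟩

lemma unit_V_nonempty (h : Biclosed M) : Nonempty (𝟙_ DiGraph).V := by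
  by_contra hV
  rw [not_nonempty_iff] at hV
  let c : Cocone (Functor.empty DiGraph : Discrete.{0} PEmpty ⥤ DiGraph) :=
    ⟨𝟙_ DiGraph, ⟨fun j => j.as.elim, by rintro ⟨⟨⟩⟩⟩⟩
  have hc : IsColimit c := {
    desc := fun s => ⟨fun v => hV.elim v, fun x _ _ => (hV.elim x : False).elim⟩
    fac := by rintro s ⟨⟨⟩⟩
    uniq := fun s m _ => hom_ext fun v => hV.elim v }
  haveI := (h J0).2
  haveI : PreservesColimitsOfSize.{0,0} (tensorRight J0) :=
    (Adjunction.ofIsLeftAdjoint (tensorRight J0)).leftAdjoint_preservesColimits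
  have hc2 : IsColimit ((tensorRight J0).mapCocone c) := isColimitOfPreserves _ hc
  let m1 : ((tensorRight J0).mapCocone c).pt ⟶ KBool := ⟨fun _ => false, fun _ _ _ => trivial⟩
  let m2 : ((tensorRight J0).mapCocone c).pt ⟶ KBool := ⟨fun _ => true, fun _ _ _ => trivial⟩
  let s : Cocone ((Functor.empty DiGraph : Discrete.{0} PEmpty ⥤ DiGraph) ⋙ tensorRight J0) := ⟨KBool, ⟨fun j => j.as.elim, by rintro ⟨⟨⟩⟩⟩⟩
  have e1 : m1 = hc2.desc s := hc2.uniq s m1 (by rintro ⟨⟨⟩⟩)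
  have e2 : m2 = hc2.desc s := hc2.uniq s m2 (by rintro ⟨⟨⟩⟩)
  have : m1 = m2 := e1.trans e2.symm
  have hw : ((tensorRight J0).mapCocone c).pt.V := (λ_ J0).inv.1 PUnit.unit
  exact Bool.false_ne_true (congrArg (fun m => m.1 hw) this)

lemma unit_V_subsingleton : ∀ x y : (𝟙_ DiGraph).V, x = y := by
  intro x y
  have w : ((J0 : DiGraph) ⊗ J0).V :=
    (bang (𝟙_ DiGraph) ▷ J0).1 ((λ_ J0).inv.1 PUnit.unit)
  have e1 : (vhat x ⊗ₘ vhat y) ≫ (λ_ (𝟙_ DiGraph)).hom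
      = ((J0 ◁ vhat y) ≫ (ρ_ J0).hom) ≫ vhat x := by
    rw [tensorHom_def', unitors_equal, Category.assoc, rightUnitor_naturality,
      Category.assoc]
  have e2 : (vhat x ⊗ₘ vhat y) ≫ (λ_ (𝟙_ DiGraph)).hom
      = ((vhat x ▷ J0) ≫ (λ_ J0).hom) ≫ vhat y := by
    rw [MonoidalCategory.tensorHom_def, Category.assoc, leftUnitor_naturality, Category.assoc]
  have := congrArg (fun (m : ((J0 : DiGraph) ⊗ J0) ⟶ 𝟙_ DiGraph) => m.1 w) (e1.symm.trans e2)
  exact this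

noncomputable def unitIso (h : Biclosed M) : 𝟙_ DiGraph ≅ J0 := by
  have x0 := Classical.choice (unit_V_nonempty h)
  haveI : IsIso (bang (𝟙_ DiGraph)) := by
    apply mkIso
    · constructor
      · exact fun a b _ => unit_V_subsingleton a b
      · exact fun u => ⟨x0, rfl⟩
    · intro a b _
      have : a = b := unit_V_subsingleton a b
      rw [this]; exact (𝟙_ DiGraph).refl b
  exact asIso (bang (𝟙_ DiGraph))

end Monoidal
end DGProof
namespace DGProof
open CategoryTheory.Limits CategoryTheory CategoryTheory.MonoidalCategory ElObj

section Monoidal2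
variable [M : MonoidalCategory DiGraph] (u : 𝟙_ DiGraph ≅ J0)

/-- The transported left unitor `J0 ⊗ X ≅ X`. -/
def lamI (X : DiGraph) : ((J0 : DiGraph) ⊗ X) ≅ X := whiskerRightIso u.symm X ≪≫ λ_ X

/-- The transported right unitor `X ⊗ J0 ≅ X`. -/
def rhoI (X : DiGraph) : (X ⊗ (J0 : DiGraph)) ≅ X := whiskerLeftIso X u.symm ≪≫ ρ_ X

lemma lamI_nat {X Y : DiGraph} (f : X ⟶ Y) :
    (J0 ◁ f) ≫ (lamI u Y).hom = (lamI u X).hom ≫ f := by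
  show (J0 ◁ f) ≫ (u.inv ▷ Y) ≫ (λ_ Y).hom = ((u.inv ▷ X) ≫ (λ_ X).hom) ≫ f
  rw [← Category.assoc, whisker_exchange, Category.assoc, leftUnitor_naturality,
    Category.assoc]

lemma rhoI_nat {X Y : DiGraph} (f : X ⟶ Y) :
    (f ▷ J0) ≫ (rhoI u Y).hom = (rhoI u X).hom ≫ f := by
  show (f ▷ J0) ≫ (Y ◁ u.inv) ≫ (ρ_ Y).hom = ((X ◁ u.inv) ≫ (ρ_ X).hom) ≫ f
  rw [← Category.assoc, ← whisker_exchange, Category.assoc, rightUnitor_naturality,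
    Category.assoc]

/-- The unique vertex of `J0 ⊗ J0`. -/
noncomputable def v0 : ((J0 : DiGraph) ⊗ J0).V := (lamI u J0).inv.1 PUnit.unit

include u in
lemma tensorJ0J0_subsingleton : ∀ w w' : ((J0 : DiGraph) ⊗ J0).V, w = w' := by
  intro w w'
  have := (isoEquiv (lamI u J0)).injective (a₁ := w) (a₂ := w')
  exact this rfl

lemma lamI_inv_J1 (x : Bool) : (lamI u J1).inv.1 x = (J0 ◁ δ x).1 (v0 u) := by
  have h1 := congrArg (fun (m : ((J0 : DiGraph) ⊗ J0) ⟶ J1) => m.1 (v0 u)) (lamI_nat u (δ x))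
  have h2 : (lamI u J1).hom.1 ((J0 ◁ δ x).1 (v0 u)) = x := h1
  calc (lamI u J1).inv.1 x
      = (lamI u J1).inv.1 ((lamI u J1).hom.1 ((J0 ◁ δ x).1 (v0 u))) := by rw [h2]
    _ = (J0 ◁ δ x).1 (v0 u) :=
        congrArg (fun (m : ((J0 : DiGraph) ⊗ J1) ⟶ _) => m.1 _) (lamI u J1).hom_inv_id

lemma rhoI_inv_J1 (x : Bool) : (rhoI u J1).inv.1 x = (δ x ▷ J0).1 (v0 u) := by
  have h1 := congrArg (fun (m : ((J0 : DiGraph) ⊗ J0) ⟶ J1) => m.1 (v0 u)) (rhoI_nat u (δ x))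
  have h2 : (rhoI u J1).hom.1 ((δ x ▷ J0).1 (v0 u)) = x := h1
  calc (rhoI u J1).inv.1 x
      = (rhoI u J1).inv.1 ((rhoI u J1).hom.1 ((δ x ▷ J0).1 (v0 u))) := by rw [h2]
    _ = (δ x ▷ J0).1 (v0 u) :=
        congrArg (fun (m : ((J1 : DiGraph) ⊗ J0) ⟶ _) => m.1 _) (rhoI u J1).hom_inv_id

/-- The four canonical vertices of `J1 ⊗ J1`. -/
noncomputable def cvert (x y : Bool) : ((J1 : DiGraph) ⊗ J1).V := (δ x ⊗ₘ δ y).1 (v0 u)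

lemma whiskerL_rho_inv (x i : Bool) :
    (J1 ◁ δ i).1 ((rhoI u J1).inv.1 x) = cvert u x i := by
  rw [rhoI_inv_J1]
  exact (congrArg (fun (m : ((J0 : DiGraph) ⊗ J0) ⟶ _) => m.1 (v0 u))
    (tensorHom_def (δ x) (δ i))).symm

lemma whiskerR_lam_inv (x i : Bool) :
    (δ i ▷ J1).1 ((lamI u J1).inv.1 x) = cvert u i x := by
  rw [lamI_inv_J1]
  exact (congrArg (fun (m : ((J0 : DiGraph) ⊗ J0) ⟶ _) => m.1 (v0 u))
    (tensorHom_def' (δ i) (δ x))).symm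

/-- First projection `J1 ⊗ J1 ⟶ J1`. -/
noncomputable def fmap : ((J1 : DiGraph) ⊗ J1) ⟶ J1 := (J1 ◁ bang J1) ≫ (rhoI u J1).hom

/-- Second projection `J1 ⊗ J1 ⟶ J1`. -/
noncomputable def gmap : ((J1 : DiGraph) ⊗ J1) ⟶ J1 := (bang J1 ▷ J1) ≫ (lamI u J1).hom

lemma fmap_c (x y : Bool) : (fmap u).1 (cvert u x y) = x := by
  have h1 : (δ x ⊗ₘ δ y) ≫ (J1 ◁ bang J1) = δ x ▷ J0 := by
    rw [← tensorHom_id, ← id_tensorHom, tensorHom_comp_tensorHom, Category.comp_id,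
      hom_to_J0 (δ y ≫ bang J1) (𝟙 J0)]
  have h2 : (δ x ⊗ₘ δ y) ≫ fmap u = (rhoI u J0).hom ≫ δ x := by
    show (δ x ⊗ₘ δ y) ≫ (J1 ◁ bang J1) ≫ (rhoI u J1).hom = _
    rw [← Category.assoc, h1, rhoI_nat]
  exact congrArg (fun (m : ((J0 : DiGraph) ⊗ J0) ⟶ J1) => m.1 (v0 u)) h2

lemma gmap_c (x y : Bool) : (gmap u).1 (cvert u x y) = y := by
  have h1 : (δ x ⊗ₘ δ y) ≫ (bang J1 ▷ J1) = J0 ◁ δ y := by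
    rw [← id_tensorHom, ← tensorHom_id, tensorHom_comp_tensorHom, Category.comp_id,
      hom_to_J0 (δ x ≫ bang J1) (𝟙 J0)]
  have h2 : (δ x ⊗ₘ δ y) ≫ gmap u = (lamI u J0).hom ≫ δ y := by
    show (δ x ⊗ₘ δ y) ≫ (bang J1 ▷ J1) ≫ (lamI u J1).hom = _
    rw [← Category.assoc, h1, lamI_nat]
  exact congrArg (fun (m : ((J0 : DiGraph) ⊗ J0) ⟶ J1) => m.1 (v0 u)) h2

lemma cvert_inj {x y x' y' : Bool} (h : cvert u x y = cvert u x' y') : x = x' ∧ y = y' :=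
  ⟨by rw [← fmap_c u x y, ← fmap_c u x' y', h], by rw [← gmap_c u x y, ← gmap_c u x' y', h]⟩

/-- `x ↦ c i x` as a morphism `J1 ⟶ J1 ⊗ J1`. -/
noncomputable def aMor (i : Bool) : (J1 : DiGraph) ⟶ (J1 ⊗ J1 : DiGraph) :=
  (lamI u J1).inv ≫ (δ i ▷ J1)

/-- `x ↦ c x j` as a morphism `J1 ⟶ J1 ⊗ J1`. -/
noncomputable def bMor (j : Bool) : (J1 : DiGraph) ⟶ (J1 ⊗ J1 : DiGraph) :=
  (rhoI u J1).inv ≫ (J1 ◁ δ j)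

lemma aMor_val (i x : Bool) : (aMor u i).1 x = cvert u i x := whiskerR_lam_inv u x i

lemma bMor_val (j x : Bool) : (bMor u j).1 x = cvert u x j := whiskerL_rho_inv u x j

lemma adj_c_snd {x y y' : Bool} (h : J1.adj y y') :
    ((J1 : DiGraph) ⊗ J1).adj (cvert u x y) (cvert u x y') := by
  have := (aMor u x).2 y y' h
  rwa [aMor_val, aMor_val] at this

lemma adj_c_fst {x x' y : Bool} (h : J1.adj x x') :
    ((J1 : DiGraph) ⊗ J1).adj (cvert u x y) (cvert u x' y) := by
  have := (bMor u y).2 x x' h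
  rwa [bMor_val, bMor_val] at this

/-- Every vertex of `J1 ⊗ J1` is one of the four canonical ones. -/
lemma c_surj (h : Biclosed M) : ∀ τ : ((J1 : DiGraph) ⊗ J1).V, ∃ x y, τ = cvert u x y := by
  classical
  by_contra hc
  push_neg at hc
  obtain ⟨t, ht⟩ := hc
  haveI := (h J1).1
  haveI : PreservesColimitsOfSize.{0,0} (tensorLeft J1) :=
    (Adjunction.ofIsLeftAdjoint (tensorLeft J1)).leftAdjoint_preservesColimits
  have hT : IsColimit ((tensorLeft J1).mapCocone (elCocone J1)) :=
    isColimitOfPreserves _ (elIsColimit J1)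
  let e00 : Edge J1 := ⟨(false, false), Or.inl rfl⟩
  let e01 : Edge J1 := ⟨(false, true), Or.inr ⟨rfl, rfl⟩⟩
  let s : Cocone (elDiagram J1 ⋙ tensorLeft J1) := {
    pt := KBool
    ι := {
      app := fun a => match a with
        | vert _ => ⟨fun _ => false, fun _ _ _ => trivial⟩
        | edge e => ⟨fun τ => if e = e00 ∧ τ = t then true else false, fun _ _ _ => trivial⟩
      naturality := by
        rintro (a|a) (b|b) f
        · apply hom_ext; intro w; rfl
        · apply hom_ext; intro w
          show (if b = e00 ∧ ((J1 : DiGraph) ◁ δ f.1).1 w = t then true else false) = false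
          rw [if_neg]
          rintro ⟨-, hw⟩
          have hw0 : (rhoI u J1).inv.1 ((rhoI u J1).hom.1 w) = w :=
            congrArg (fun (m : ((J1 : DiGraph) ⊗ J0) ⟶ _) => m.1 w) (rhoI u J1).hom_inv_id
          have hw2 := whiskerL_rho_inv u ((rhoI u J1).hom.1 w) f.1
          rw [hw0] at hw2
          exact ht _ _ (hw.symm.trans hw2)
        · exact f.elim
        · cases (show PLift (a = b) from f) with | up hf =>
            subst hf
            show (tensorLeft J1).map (𝟙 J1) ≫ _ = _
            rw [CategoryTheory.Functor.map_id]
            apply hom_ext; intro w; rfl } }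
  have h01 := hT.fac s (edge e01)
  have h00 := hT.fac s (edge e00)
  have he : ehat e01 = 𝟙 J1 := hom_ext (fun i => by cases i <;> rfl)
  have hσ : hT.desc s = s.ι.app (edge e01) := by
    rw [← h01]
    show hT.desc s = (tensorLeft J1).map (ehat e01) ≫ hT.desc s
    rw [he, CategoryTheory.Functor.map_id]; exact (Category.id_comp _).symm
  have hval : (hT.desc s).1 (((J1 : DiGraph) ◁ ehat e00).1 t) = (s.ι.app (edge e00)).1 t :=
    congrArg (fun (m : ((J1 : DiGraph) ⊗ J1) ⟶ KBool) => m.1 t) h00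
  rw [hσ] at hval
  have hL : (s.ι.app (edge e01)).1 (((J1 : DiGraph) ◁ ehat e00).1 t) = false := by
    show (if e01 = e00 ∧ ((J1 : DiGraph) ◁ ehat e00).1 t = t then true else false) = false
    rw [if_neg]
    rintro ⟨h1, -⟩
    exact Bool.noConfusion (congrArg (fun (e : Edge J1) => e.1.2) h1)
  have hR : (s.ι.app (edge e00)).1 t = true := by
    show (if e00 = e00 ∧ t = t then true else false) = true
    rw [if_pos ⟨rfl, rfl⟩]
  exact Bool.false_ne_true ((hL.symm.trans hval).trans hR)

end Monoidal2
end DGProof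
namespace DGProof
open CategoryTheory.Limits CategoryTheory CategoryTheory.MonoidalCategory ElObj

section Monoidal3
variable [M : MonoidalCategory DiGraph] (u : 𝟙_ DiGraph ≅ J0)

/-- The canonical comparison `G □ H ⟶ G ⊗ H`. -/
noncomputable def phi (G H : DiGraph) : boxProd G H ⟶ (G ⊗ H : DiGraph) :=
  ⟨fun p => (vhat p.1 ⊗ₘ vhat p.2).1 (v0 u), by
    rintro ⟨g, h⟩ ⟨g', h'⟩ (⟨he, hadj⟩ | ⟨hadj, he⟩)
    · dsimp only at he hadj; subst he
      have hedge := ((lamI u J1).inv).2 false true (Or.inr ⟨rfl, rfl⟩)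
      have himg := (vhat g ⊗ₘ ehat ⟨(h,h'),hadj⟩).2 _ _ hedge
      have hkey : ∀ x : Bool, (vhat g ⊗ₘ ehat ⟨(h,h'),hadj⟩).1 ((lamI u J1).inv.1 x)
          = (vhat g ⊗ₘ vhat (ept ⟨(h,h'),hadj⟩ x)).1 (v0 u) := by
        intro x
        rw [lamI_inv_J1]
        have hm : (J0 ◁ δ x) ≫ (vhat g ⊗ₘ ehat ⟨(h,h'),hadj⟩)
            = vhat g ⊗ₘ vhat (ept ⟨(h,h'),hadj⟩ x) := by
          rw [← id_tensorHom, tensorHom_comp_tensorHom, Category.id_comp,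
            show δ x ≫ ehat ⟨(h,h'),hadj⟩ = vhat (ept ⟨(h,h'),hadj⟩ x) from hom_ext fun _ => rfl]
        exact congrArg (fun (m : ((J0 : DiGraph) ⊗ J0) ⟶ _) => m.1 (v0 u)) hm
      rw [hkey false, hkey true] at himg
      exact himg
    · dsimp only at he hadj; subst he
      have hedge := ((rhoI u J1).inv).2 false true (Or.inr ⟨rfl, rfl⟩)
      have himg := (ehat ⟨(g,g'),hadj⟩ ⊗ₘ vhat h).2 _ _ hedge
      have hkey : ∀ x : Bool, (ehat ⟨(g,g'),hadj⟩ ⊗ₘ vhat h).1 ((rhoI u J1).inv.1 x)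
          = (vhat (ept ⟨(g,g'),hadj⟩ x) ⊗ₘ vhat h).1 (v0 u) := by
        intro x
        rw [rhoI_inv_J1]
        have hm : (δ x ▷ J0) ≫ (ehat ⟨(g,g'),hadj⟩ ⊗ₘ vhat h)
            = vhat (ept ⟨(g,g'),hadj⟩ x) ⊗ₘ vhat h := by
          rw [← tensorHom_id, tensorHom_comp_tensorHom, Category.id_comp,
            show δ x ≫ ehat ⟨(g,g'),hadj⟩ = vhat (ept ⟨(g,g'),hadj⟩ x) from hom_ext fun _ => rfl]
        exact congrArg (fun (m : ((J0 : DiGraph) ⊗ J0) ⟶ _) => m.1 (v0 u)) hm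
      rw [hkey false, hkey true] at himg
      exact himg⟩

/-- The canonical comparison `G ⊗ H ⟶ G ⊠ H`. -/
noncomputable def theta (G H : DiGraph) : (G ⊗ H : DiGraph) ⟶ catProd G H :=
  ⟨fun τ => (((G ◁ bang H) ≫ (rhoI u G).hom).1 τ, ((bang G ▷ H) ≫ (lamI u H).hom).1 τ),
   fun τ τ' hadj => Or.inr (Or.inr ⟨((G ◁ bang H) ≫ (rhoI u G).hom).2 _ _ hadj,
     ((bang G ▷ H) ≫ (lamI u H).hom).2 _ _ hadj⟩)⟩

lemma phi_nat_fst {G G' : DiGraph} (ψ : G ⟶ G') (H : DiGraph) :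
    (boxBifunctor.map ψ).app H ≫ phi u G' H = phi u G H ≫ (ψ ▷ H) := by
  apply hom_ext; rintro ⟨g, hh⟩
  have hm : (vhat g ⊗ₘ vhat hh) ≫ (ψ ▷ H) = vhat (ψ.1 g) ⊗ₘ vhat hh := by
    rw [← tensorHom_id, tensorHom_comp_tensorHom, Category.comp_id,
      show vhat g ≫ ψ = vhat (ψ.1 g) from hom_ext fun _ => rfl]
  exact (congrArg (fun (m : ((J0 : DiGraph) ⊗ J0) ⟶ _) => m.1 (v0 u)) hm).symm

lemma phi_nat_snd (G : DiGraph) {H H' : DiGraph} (f : H ⟶ H') :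
    (boxBifunctor.obj G).map f ≫ phi u G H' = phi u G H ≫ (G ◁ f) := by
  apply hom_ext; rintro ⟨g, hh⟩
  have hm : (vhat g ⊗ₘ vhat hh) ≫ (G ◁ f) = vhat g ⊗ₘ vhat (f.1 hh) := by
    rw [← id_tensorHom, tensorHom_comp_tensorHom, Category.comp_id,
      show vhat hh ≫ f = vhat (f.1 hh) from hom_ext fun _ => rfl]
  exact (congrArg (fun (m : ((J0 : DiGraph) ⊗ J0) ⟶ _) => m.1 (v0 u)) hm).symm

lemma theta_nat_fst {G G' : DiGraph} (ψ : G ⟶ G') (H : DiGraph) :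
    (ψ ▷ H) ≫ theta u G' H = theta u G H ≫ (catBifunctor.map ψ).app H := by
  have eq1 : (ψ ▷ H) ≫ (G' ◁ bang H) ≫ (rhoI u G').hom
      = ((G ◁ bang H) ≫ (rhoI u G).hom) ≫ ψ := by
    rw [← Category.assoc, ← whisker_exchange, Category.assoc, rhoI_nat, ← Category.assoc]
  have eq2 : (ψ ▷ H) ≫ (bang G' ▷ H) ≫ (lamI u H).hom
      = (bang G ▷ H) ≫ (lamI u H).hom := by
    rw [← Category.assoc, ← comp_whiskerRight, hom_to_J0 (ψ ≫ bang G') (bang G)]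
  apply hom_ext; intro τ
  have h1 := congrArg (fun (m : ((G : DiGraph) ⊗ H) ⟶ G') => m.1 τ) eq1
  have h2 := congrArg (fun (m : ((G : DiGraph) ⊗ H) ⟶ H) => m.1 τ) eq2
  exact Prod.ext_iff.mpr ⟨h1, h2⟩

lemma theta_nat_snd (G : DiGraph) {H H' : DiGraph} (f : H ⟶ H') :
    (G ◁ f) ≫ theta u G H' = theta u G H ≫ (catBifunctor.obj G).map f := by
  have eq1 : (G ◁ f) ≫ (G ◁ bang H') ≫ (rhoI u G).hom
      = (G ◁ bang H) ≫ (rhoI u G).hom := by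
    rw [← Category.assoc, ← MonoidalCategory.whiskerLeft_comp, hom_to_J0 (f ≫ bang H') (bang H)]
  have eq2 : (G ◁ f) ≫ (bang G ▷ H') ≫ (lamI u H').hom
      = ((bang G ▷ H) ≫ (lamI u H).hom) ≫ f := by
    rw [← Category.assoc, whisker_exchange, Category.assoc, lamI_nat, ← Category.assoc]
  apply hom_ext; intro τ
  have h1 := congrArg (fun (m : ((G : DiGraph) ⊗ H) ⟶ G) => m.1 τ) eq1
  have h2 := congrArg (fun (m : ((G : DiGraph) ⊗ H) ⟶ H') => m.1 τ) eq2
  exact Prod.ext_iff.mpr ⟨h1, h2⟩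

/-! ### Iso of the comparison maps on generators -/

lemma phi_J0_J0_iso : IsIso (phi u J0 J0) := by
  apply mkIso
  · constructor
    · exact fun a b _ => Subsingleton.elim a b
    · exact fun w => ⟨(PUnit.unit, PUnit.unit), tensorJ0J0_subsingleton u _ w⟩
  · intro a b _
    exact Or.inl ⟨Subsingleton.elim _ _, trivial⟩

lemma phi_val_J1_J0 (p : (boxProd J1 J0).V) :
    (phi u J1 J0).1 p = (rhoI u J1).inv.1 p.1 := by
  have h1 : (vhat p.1 ⊗ₘ vhat p.2) = (δ p.1 ▷ J0) := by
    rw [← tensorHom_id, hom_to_J0 (vhat p.2) (𝟙 J0)]; rfl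
  show (vhat p.1 ⊗ₘ vhat p.2).1 (v0 u) = _
  rw [h1]; exact (rhoI_inv_J1 u p.1).symm

lemma phi_J1_J0_iso : IsIso (phi u J1 J0) := by
  apply mkIso
  · constructor
    · intro a b hab
      rw [phi_val_J1_J0, phi_val_J1_J0] at hab
      exact Prod.ext ((isoEquiv (rhoI u J1)).symm.injective hab) (Subsingleton.elim _ _)
    · intro w
      refine ⟨((rhoI u J1).hom.1 w, PUnit.unit), ?_⟩
      refine (phi_val_J1_J0 u _).trans ?_
      exact congrArg (fun (m : ((J1 : DiGraph) ⊗ J0) ⟶ _) => m.1 w) (rhoI u J1).hom_inv_id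
  · rintro ⟨x, ux⟩ ⟨y, uy⟩ hab
    have hab : ((J1 : DiGraph) ⊗ J0).adj ((rhoI u J1).inv.1 x) ((rhoI u J1).inv.1 y) :=
      cast (congrArg₂ ((J1 : DiGraph) ⊗ J0).adj (phi_val_J1_J0 u (x, ux)) (phi_val_J1_J0 u (y, uy))) hab
    have hadj := ((rhoI u J1).hom).2 _ _ hab
    have hx : (rhoI u J1).hom.1 ((rhoI u J1).inv.1 x) = x :=
      congrArg (fun (m : J1 ⟶ J1) => m.1 x) (rhoI u J1).inv_hom_id
    have hy : (rhoI u J1).hom.1 ((rhoI u J1).inv.1 y) = y :=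
      congrArg (fun (m : J1 ⟶ J1) => m.1 y) (rhoI u J1).inv_hom_id
    rw [hx, hy] at hadj
    exact Or.inr ⟨hadj, Subsingleton.elim _ _⟩

lemma phi_val_J0_J1 (p : (boxProd J0 J1).V) :
    (phi u J0 J1).1 p = (lamI u J1).inv.1 p.2 := by
  have h1 : (vhat p.1 ⊗ₘ vhat p.2) = (J0 ◁ δ p.2) := by
    rw [← id_tensorHom, hom_to_J0 (vhat p.1) (𝟙 J0)]; rfl
  show (vhat p.1 ⊗ₘ vhat p.2).1 (v0 u) = _
  rw [h1]; exact (lamI_inv_J1 u p.2).symm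

lemma phi_J0_J1_iso : IsIso (phi u J0 J1) := by
  apply mkIso
  · constructor
    · intro a b hab
      rw [phi_val_J0_J1, phi_val_J0_J1] at hab
      exact Prod.ext (Subsingleton.elim _ _) ((isoEquiv (lamI u J1)).symm.injective hab)
    · intro w
      refine ⟨(PUnit.unit, (lamI u J1).hom.1 w), ?_⟩
      refine (phi_val_J0_J1 u _).trans ?_
      exact congrArg (fun (m : ((J0 : DiGraph) ⊗ J1) ⟶ _) => m.1 w) (lamI u J1).hom_inv_id
  · rintro ⟨ux, x⟩ ⟨uy, y⟩ hab
    have hab : ((J0 : DiGraph) ⊗ J1).adj ((lamI u J1).inv.1 x) ((lamI u J1).inv.1 y) :=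
      cast (congrArg₂ ((J0 : DiGraph) ⊗ J1).adj (phi_val_J0_J1 u (ux, x)) (phi_val_J0_J1 u (uy, y))) hab
    have hadj := ((lamI u J1).hom).2 _ _ hab
    have hx : (lamI u J1).hom.1 ((lamI u J1).inv.1 x) = x :=
      congrArg (fun (m : J1 ⟶ J1) => m.1 x) (lamI u J1).inv_hom_id
    have hy : (lamI u J1).hom.1 ((lamI u J1).inv.1 y) = y :=
      congrArg (fun (m : J1 ⟶ J1) => m.1 y) (lamI u J1).inv_hom_id
    rw [hx, hy] at hadj
    exact Or.inl ⟨Subsingleton.elim _ _, hadj⟩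

lemma phi_val_J1_J1 (p : (boxProd J1 J1).V) :
    (phi u J1 J1).1 p = cvert u p.1 p.2 := rfl

lemma phi_J1_J1_iso (h : Biclosed M)
    (hd : ¬ ((J1 : DiGraph) ⊗ J1).adj (cvert u false false) (cvert u true true)) :
    IsIso (phi u J1 J1) := by
  apply mkIso
  · constructor
    · intro a b hab
      rw [phi_val_J1_J1, phi_val_J1_J1] at hab
      obtain ⟨h1, h2⟩ := cvert_inj u hab
      exact Prod.ext h1 h2
    · intro w
      obtain ⟨x, y, hxy⟩ := c_surj u h w
      exact ⟨(x, y), hxy.symm⟩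
  · rintro ⟨x, y⟩ ⟨x', y'⟩ hab
    change ((J1 : DiGraph) ⊗ J1).adj (cvert u x y) (cvert u x' y') at hab
    have hx : J1.adj x x' := by
      have := (fmap u).2 _ _ hab; exact cast (congrArg₂ J1.adj (fmap_c u x y) (fmap_c u x' y')) this
    have hy : J1.adj y y' := by
      have := (gmap u).2 _ _ hab; exact cast (congrArg₂ J1.adj (gmap_c u x y) (gmap_c u x' y')) this
    rcases hx with hxe | ⟨hx0, hx1⟩
    · exact Or.inl ⟨hxe, hy⟩
    · rcases hy with hye | ⟨hy0, hy1⟩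
      · exact Or.inr ⟨Or.inr ⟨hx0, hx1⟩, hye⟩
      · subst hx0; subst hx1; subst hy0; subst hy1
        exact absurd hab hd

lemma theta_val_J1_J1 (τ : ((J1 : DiGraph) ⊗ J1).V) :
    (theta u J1 J1).1 τ = ((fmap u).1 τ, (gmap u).1 τ) := rfl

lemma theta_J1_J1_iso (h : Biclosed M)
    (hd : ((J1 : DiGraph) ⊗ J1).adj (cvert u false false) (cvert u true true)) :
    IsIso (theta u J1 J1) := by
  apply mkIso
  · constructor
    · intro a b hab
      obtain ⟨x, y, rfl⟩ := c_surj u h a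
      obtain ⟨x', y', rfl⟩ := c_surj u h b
      rw [theta_val_J1_J1, theta_val_J1_J1, fmap_c, gmap_c, fmap_c, gmap_c] at hab
      rw [show x = x' from congrArg Prod.fst hab, show y = y' from congrArg Prod.snd hab]
    · rintro ⟨x, y⟩
      exact ⟨cvert u x y, Prod.ext (fmap_c u x y) (gmap_c u x y)⟩
  · intro a b hab
    obtain ⟨x, y, rfl⟩ := c_surj u h a
    obtain ⟨x', y', rfl⟩ := c_surj u h b
    rw [theta_val_J1_J1, theta_val_J1_J1, fmap_c, gmap_c, fmap_c, gmap_c] at hab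
    obtain ⟨hx, hy⟩ := catProd_adj_iff.mp hab
    rcases hx with hxe | ⟨hx0, hx1⟩
    · subst hxe; exact adj_c_snd u hy
    · rcases hy with hye | ⟨hy0, hy1⟩
      · subst hye; exact adj_c_fst u (Or.inr ⟨hx0, hx1⟩)
      · subst hx0; subst hx1; subst hy0; subst hy1; exact hd

lemma theta_J0_J0_iso : IsIso (theta u J0 J0) := by
  apply mkIso
  · constructor
    · exact fun a b _ => tensorJ0J0_subsingleton u a b
    · exact fun w => ⟨v0 u, Subsingleton.elim _ _⟩
  · intro a b _
    rw [tensorJ0J0_subsingleton u a b]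
    exact ((J0 : DiGraph) ⊗ J0).refl b

lemma theta_J1_J0_iso : IsIso (theta u J1 J0) := by
  have hcomp : ((J1 : DiGraph) ◁ bang J0) ≫ (rhoI u J1).hom = (rhoI u J1).hom := by
    rw [hom_to_J0 (bang J0) (𝟙 J0), MonoidalCategory.whiskerLeft_id, Category.id_comp]
  have hval : ∀ τ, (((J1 : DiGraph) ◁ bang J0) ≫ (rhoI u J1).hom).1 τ = (rhoI u J1).hom.1 τ :=
    fun τ => congrArg (fun (m : _ ⟶ J1) => m.1 τ) hcomp
  have hinvhom : ∀ τ, (rhoI u J1).inv.1 ((rhoI u J1).hom.1 τ) = τ :=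
    fun τ => congrArg (fun (m : ((J1 : DiGraph) ⊗ J0) ⟶ _) => m.1 τ) (rhoI u J1).hom_inv_id
  apply mkIso
  · constructor
    · intro a b hab
      have h1 : (rhoI u J1).hom.1 a = (rhoI u J1).hom.1 b := by
        have := congrArg Prod.fst hab
        rwa [show ((theta u J1 J0).1 a).1 = (((J1 : DiGraph) ◁ bang J0) ≫ (rhoI u J1).hom).1 a from rfl,
          show ((theta u J1 J0).1 b).1 = (((J1 : DiGraph) ◁ bang J0) ≫ (rhoI u J1).hom).1 b from rfl,
          hval, hval] at this
      exact (isoEquiv (rhoI u J1)).injective h1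
    · rintro ⟨x, w⟩
      refine ⟨(rhoI u J1).inv.1 x, Prod.ext ?_ (Subsingleton.elim _ _)⟩
      show (((J1 : DiGraph) ◁ bang J0) ≫ (rhoI u J1).hom).1 ((rhoI u J1).inv.1 x) = x
      rw [hval]
      exact congrArg (fun (m : J1 ⟶ J1) => m.1 x) (rhoI u J1).inv_hom_id
  · intro a b hab
    have hfst : J1.adj ((((J1 : DiGraph) ◁ bang J0) ≫ (rhoI u J1).hom).1 a)
        ((((J1 : DiGraph) ◁ bang J0) ≫ (rhoI u J1).hom).1 b) := (catProd_adj_iff.mp hab).1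
    rw [hval, hval] at hfst
    have := ((rhoI u J1).inv).2 _ _ hfst
    rwa [hinvhom, hinvhom] at this

lemma theta_J0_J1_iso : IsIso (theta u J0 J1) := by
  have hcomp : (bang (J0 : DiGraph) ▷ J1) ≫ (lamI u J1).hom = (lamI u J1).hom := by
    rw [hom_to_J0 (bang J0) (𝟙 J0), MonoidalCategory.id_whiskerRight, Category.id_comp]
  have hval : ∀ τ, ((bang (J0 : DiGraph) ▷ J1) ≫ (lamI u J1).hom).1 τ = (lamI u J1).hom.1 τ :=
    fun τ => congrArg (fun (m : _ ⟶ J1) => m.1 τ) hcomp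
  have hinvhom : ∀ τ, (lamI u J1).inv.1 ((lamI u J1).hom.1 τ) = τ :=
    fun τ => congrArg (fun (m : ((J0 : DiGraph) ⊗ J1) ⟶ _) => m.1 τ) (lamI u J1).hom_inv_id
  apply mkIso
  · constructor
    · intro a b hab
      have h1 : (lamI u J1).hom.1 a = (lamI u J1).hom.1 b := by
        have := congrArg Prod.snd hab
        rwa [show ((theta u J0 J1).1 a).2 = ((bang (J0 : DiGraph) ▷ J1) ≫ (lamI u J1).hom).1 a from rfl,
          show ((theta u J0 J1).1 b).2 = ((bang (J0 : DiGraph) ▷ J1) ≫ (lamI u J1).hom).1 b from rfl,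
          hval, hval] at this
      exact (isoEquiv (lamI u J1)).injective h1
    · rintro ⟨w, x⟩
      refine ⟨(lamI u J1).inv.1 x, Prod.ext (Subsingleton.elim _ _) ?_⟩
      show ((bang (J0 : DiGraph) ▷ J1) ≫ (lamI u J1).hom).1 ((lamI u J1).inv.1 x) = x
      rw [hval]
      exact congrArg (fun (m : J1 ⟶ J1) => m.1 x) (lamI u J1).inv_hom_id
  · intro a b hab
    have hsnd : J1.adj (((bang (J0 : DiGraph) ▷ J1) ≫ (lamI u J1).hom).1 a)
        (((bang (J0 : DiGraph) ▷ J1) ≫ (lamI u J1).hom).1 b) := (catProd_adj_iff.mp hab).2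
    rw [hval, hval] at hsnd
    have := ((lamI u J1).inv).2 _ _ hsnd
    rwa [hinvhom, hinvhom] at this

/-! ### The comparison maps as natural transformations -/

noncomputable def phiR (K : DiGraph) : boxBifunctor.flip.obj K ⟶ tensorRight K where
  app G := phi u G K
  naturality {G G'} ψ := phi_nat_fst u ψ K

noncomputable def phiL (G : DiGraph) : boxBifunctor.obj G ⟶ tensorLeft G where
  app H := phi u G H
  naturality {H H'} f := phi_nat_snd u G f

noncomputable def thetaR (K : DiGraph) : tensorRight K ⟶ catBifunctor.flip.obj K where
  app G := theta u G K
  naturality {G G'} ψ := theta_nat_fst u ψ K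

noncomputable def thetaL (G : DiGraph) : tensorLeft G ⟶ catBifunctor.obj G where
  app H := theta u G H
  naturality {H H'} f := theta_nat_snd u G f

end Monoidal3
end DGProof
namespace DGProof
open CategoryTheory.Limits CategoryTheory CategoryTheory.MonoidalCategory ElObj

section Final
variable [M : MonoidalCategory DiGraph]

noncomputable def tensorRight_pres (h : Biclosed M) (K G : DiGraph) :
    IsColimit ((tensorRight K).mapCocone (elCocone G)) := by
  haveI := (h K).2
  haveI : PreservesColimitsOfSize.{0,0} (tensorRight K) :=
    (Adjunction.ofIsLeftAdjoint (tensorRight K)).leftAdjoint_preservesColimits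
  exact isColimitOfPreserves _ (elIsColimit G)

noncomputable def tensorLeft_pres (h : Biclosed M) (G H : DiGraph) :
    IsColimit ((tensorLeft G).mapCocone (elCocone H)) := by
  haveI := (h G).1
  haveI : PreservesColimitsOfSize.{0,0} (tensorLeft G) :=
    (Adjunction.ofIsLeftAdjoint (tensorLeft G)).leftAdjoint_preservesColimits
  exact isColimitOfPreserves _ (elIsColimit H)

lemma main_box (h : Biclosed M) (u : 𝟙_ DiGraph ≅ J0)
    (hd : ¬ ((J1 : DiGraph) ⊗ J1).adj (cvert u false false) (cvert u true true)) :
    Nonempty ((curriedTensor DiGraph) ≅ boxBifunctor) := by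
  have s10 : ∀ G, IsIso (phi u G J0) := fun G =>
    key (phiR u J0) G (boxRightPres J0 G) (tensorRight_pres h J0 G)
      (phi_J0_J0_iso u) (phi_J1_J0_iso u)
  have s11 : ∀ G, IsIso (phi u G J1) := fun G =>
    key (phiR u J1) G (boxRightPres J1 G) (tensorRight_pres h J1 G)
      (phi_J0_J1_iso u) (phi_J1_J1_iso u h hd)
  have s2 : ∀ G H, IsIso (phi u G H) := fun G H =>
    key (phiL u G) H (boxLeftPres G H) (tensorLeft_pres h G H) (s10 G) (s11 G)
  refine ⟨Iso.symm ?_⟩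
  refine NatIso.ofComponents
    (fun G => NatIso.ofComponents
      (fun H => @asIso _ _ _ _ (phi u G H) (s2 G H))
      (fun {H H'} f => phi_nat_snd u G f)) ?_
  intro G G' ψ
  apply NatTrans.ext
  funext H
  exact phi_nat_fst u ψ H

lemma main_cat (h : Biclosed M) (u : 𝟙_ DiGraph ≅ J0)
    (hd : ((J1 : DiGraph) ⊗ J1).adj (cvert u false false) (cvert u true true)) :
    Nonempty ((curriedTensor DiGraph) ≅ catBifunctor) := by
  have s10 : ∀ G, IsIso (theta u G J0) := fun G =>
    key (thetaR u J0) G (tensorRight_pres h J0 G) (catRightPres J0 G)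
      (theta_J0_J0_iso u) (theta_J1_J0_iso u)
  have s11 : ∀ G, IsIso (theta u G J1) := fun G =>
    key (thetaR u J1) G (tensorRight_pres h J1 G) (catRightPres J1 G)
      (theta_J0_J1_iso u) (theta_J1_J1_iso u h hd)
  have s2 : ∀ G H, IsIso (theta u G H) := fun G H =>
    key (thetaL u G) H (tensorLeft_pres h G H) (catLeftPres G H) (s10 G) (s11 G)
  refine ⟨?_⟩
  refine NatIso.ofComponents
    (fun G => NatIso.ofComponents
      (fun H => @asIso _ _ _ _ (theta u G H) (s2 G H))
      (fun {H H'} f => theta_nat_snd u G f)) ?_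
  intro G G' ψ
  apply NatTrans.ext
  funext H
  exact theta_nat_fst u ψ H

lemma main_all (h : Biclosed M) :
    Nonempty ((curriedTensor DiGraph) ≅ boxBifunctor) ∨
    Nonempty ((curriedTensor DiGraph) ≅ catBifunctor) := by
  have u := unitIso h
  by_cases hd : ((J1 : DiGraph) ⊗ J1).adj (cvert u false false) (cvert u true true)
  · exact Or.inr (main_cat h u hd)
  · exact Or.inl (main_box h u hd)

end Final
end DGProof

/-- The only biclosed monoidal structures on the category of directed reflexive graphs
are, up to isomorphism, the box product `□` and the categorical product `⊠`, both with
unit `J₀`: for any biclosed monoidal structure, the tensor bifunctor is naturally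
isomorphic to one of `□`, `⊠`, and its unit is isomorphic to `J₀`. -/
theorem diGraph_biclosed_classification :
    ∀ M : MonoidalCategory DiGraph, Biclosed M →
      (Nonempty (M.tensorUnit ≅ J0)) ∧
      (Nonempty ((@MonoidalCategory.curriedTensor DiGraph _ M) ≅ boxBifunctor) ∨
       Nonempty ((@MonoidalCategory.curriedTensor DiGraph _ M) ≅ catBifunctor)) := by
  intro M h
  letI := M
  exact ⟨⟨DGProof.unitIso h⟩, DGProof.main_all h⟩
end

section
/- Up to monoidal isomorphism, the only biclosed monoidal structures on the category of undirected reflexive graphs are the box product □ and the categorical product ⊠ (both with unit the one-vertex graph I₀). -/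
open CategoryTheory

section UGraphAux
open CategoryTheory Limits

namespace UGraphAux

lemma hom_ext {X Y : UGraph} {f g : X ⟶ Y} (h : ∀ v, f.1 v = g.1 v) : f = g :=
  Subtype.ext (funext h)

lemma comp_fn {X Y Z : UGraph} (f : X ⟶ Y) (g : Y ⟶ Z) (v : X.V) :
    (f ≫ g).1 v = g.1 (f.1 v) := rfl

lemma id_fn {X : UGraph} (v : X.V) : (𝟙 X : X ⟶ X).1 v = v := rfl

/-- The morphism `I0 ⟶ X` picking a vertex. -/
def vtx {X : UGraph} (x : X.V) : I0 ⟶ X := ⟨fun _ => x, fun _ _ _ => X.refl x⟩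

lemma vtx_comp {X Y : UGraph} (x : X.V) (f : X ⟶ Y) : vtx x ≫ f = vtx (f.1 x) := rfl

/-- The unique morphism to the terminal graph `I0`. -/
def toI0 (X : UGraph) : X ⟶ I0 := ⟨fun _ => PUnit.unit, fun _ _ _ => trivial⟩

lemma toI0_unique {X : UGraph} (f g : X ⟶ I0) : f = g := hom_ext (fun _ => rfl)

/-- Morphisms into a graph with subsingleton vertex set from `I0` are unique. -/
lemma hom_from_I0_unique {Z : UGraph} (h : ∀ a b : Z.V, a = b) (f g : I0 ⟶ Z) : f = g :=
  hom_ext (fun _ => h _ _)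

/-- The edge morphism `I1 ⟶ X` attached to an adjacency. -/
def edg {X : UGraph} {x y : X.V} (h : X.adj x y) : I1 ⟶ X :=
  ⟨fun b => match b with | false => x | true => y, by
    intro a b _
    cases a <;> cases b
    · exact X.refl x
    · exact h
    · exact X.symm _ _ h
    · exact X.refl y⟩

@[simp] lemma edg_ff {X : UGraph} {x y : X.V} (h : X.adj x y) : (edg h).1 false = x := rfl
@[simp] lemma edg_tt {X : UGraph} {x y : X.V} (h : X.adj x y) : (edg h).1 true = y := rfl

/-- Isos are vertex bijections. -/
lemma iso_inj {X Y : UGraph} (e : X ≅ Y) : Function.Injective e.hom.1 := by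
  intro a b h
  have := congrArg (fun f => Subtype.val f) e.hom_inv_id
  have ha := congrFun this a
  have hb := congrFun this b
  calc a = e.inv.1 (e.hom.1 a) := ha.symm
    _ = e.inv.1 (e.hom.1 b) := by rw [h]
    _ = b := hb

lemma iso_surj {X Y : UGraph} (e : X ≅ Y) : Function.Surjective e.hom.1 := by
  intro y
  refine ⟨e.inv.1 y, ?_⟩
  have := congrArg (fun f => Subtype.val f) e.inv_hom_id
  exact congrFun this y

/-- Epimorphisms are vertex-surjective. -/
def KProp : UGraph := ⟨Prop, fun _ _ => True, fun _ => trivial, fun _ _ _ => trivial⟩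

lemma surj_of_epi {A B : UGraph} (f : A ⟶ B) (hf : Epi f) : Function.Surjective f.1 := by
  by_contra hns
  rw [Function.Surjective] at hns
  push_neg at hns
  obtain ⟨b0, hb0⟩ := hns
  let g1 : B ⟶ KProp := ⟨fun _ => True, fun _ _ _ => trivial⟩
  let g2 : B ⟶ KProp := ⟨fun b => ∃ a, f.1 a = b, fun _ _ _ => trivial⟩
  have : f ≫ g1 = f ≫ g2 := by
    apply hom_ext
    intro a
    show True = ∃ a', f.1 a' = f.1 a
    exact propext ⟨fun _ => ⟨a, rfl⟩, fun _ => trivial⟩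
  have h12 : g1 = g2 := (cancel_epi f).mp this
  have : (True : Prop) = ∃ a, f.1 a = b0 := congrFun (congrArg Subtype.val h12) b0
  obtain ⟨a, ha⟩ := this ▸ trivial
  exact hb0 a ha

lemma epi_of_surj {A B : UGraph} (f : A ⟶ B) (hf : Function.Surjective f.1) : Epi f := by
  constructor
  intro Z g h hgh
  apply hom_ext
  intro v
  obtain ⟨a, rfl⟩ := hf v
  exact congrFun (congrArg Subtype.val hgh) a

/-- Disjoint union of a family of graphs. -/
def sigmaGraph {ι : Type} (F : ι → UGraph) : UGraph where
  V := Σ i, (F i).V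
  adj x y := ∃ (i : ι) (a b : (F i).V), x = ⟨i, a⟩ ∧ y = ⟨i, b⟩ ∧ (F i).adj a b
  refl x := ⟨x.1, x.2, x.2, rfl, rfl, (F x.1).refl x.2⟩
  symm x y h := by
    obtain ⟨i, a, b, hx, hy, h⟩ := h
    exact ⟨i, b, a, hy, hx, (F i).symm _ _ h⟩

def sigmaInj {ι : Type} (F : ι → UGraph) (i : ι) : F i ⟶ sigmaGraph F :=
  ⟨fun a => ⟨i, a⟩, fun a b h => ⟨i, a, b, rfl, rfl, h⟩⟩

/-- The disjoint union is a coproduct. -/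
def sigmaIsColimit {ι : Type} (F : ι → UGraph) :
    IsColimit (Cofan.mk (sigmaGraph F) (sigmaInj F)) := by
  refine mkCofanColimit _ (fun t => ⟨fun x => (t.inj x.1).1 x.2, ?_⟩) (fun t j => rfl) ?_
  · rintro x y ⟨i, a, b, rfl, rfl, h⟩
    exact (t.inj i).2 a b h
  · intro t m hm
    apply hom_ext
    rintro ⟨i, a⟩
    exact congrFun (congrArg Subtype.val (hm i)) a

/-- Vertex- and edge-lifting through any coproduct cofan. -/
lemma cofan_lift {ι : Type} {F : ι → UGraph} {P : UGraph} (g : ∀ i, F i ⟶ P)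
    (t : IsColimit (Cofan.mk P g)) :
    (∀ v : P.V, ∃ i a, (g i).1 a = v) ∧
    (∀ v w, P.adj v w → ∃ i a b, (F i).adj a b ∧ (g i).1 a = v ∧ (g i).1 b = w) := by
  let e : P ≅ sigmaGraph F := t.coconePointUniqueUpToIso (sigmaIsColimit F)
  have he : ∀ i, g i ≫ e.hom = sigmaInj F i := fun i =>
    t.comp_coconePointUniqueUpToIso_hom (sigmaIsColimit F) ⟨i⟩
  have hinv : ∀ (v : P.V), e.inv.1 (e.hom.1 v) = v := fun v =>
    congrFun (congrArg Subtype.val e.hom_inv_id) v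
  have key : ∀ (v : P.V) (i : ι) (a : (F i).V),
      e.hom.1 v = ⟨i, a⟩ → (g i).1 a = v := by
    intro v i a h
    have : (g i ≫ e.hom).1 a = (⟨i, a⟩ : (sigmaGraph F).V) :=
      congrFun (congrArg Subtype.val (he i)) a
    have h2 : e.hom.1 ((g i).1 a) = e.hom.1 v := by rw [h]; exact this
    have := congrArg e.inv.1 h2
    rwa [hinv, hinv] at this
  constructor
  · intro v
    cases hv : e.hom.1 v with
    | mk i a => exact ⟨i, a, key v i a hv⟩
  · intro v w h
    have : (sigmaGraph F).adj (e.hom.1 v) (e.hom.1 w) := e.hom.2 _ _ h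
    obtain ⟨i, a, b, ha, hb, hab⟩ := this
    exact ⟨i, a, b, hab, key v i a ha, key w i b hb⟩

/-- Quotient graph of a parallel pair. -/
def quotRel {A B : UGraph} (f g : A ⟶ B) : B.V → B.V → Prop :=
  fun v w => ∃ a, f.1 a = v ∧ g.1 a = w

def quotGraph {A B : UGraph} (f g : A ⟶ B) : UGraph where
  V := Quot (quotRel f g)
  adj q r := ∃ v w, B.adj v w ∧ Quot.mk _ v = q ∧ Quot.mk _ w = r
  refl q := by
    induction q using Quot.ind with
    | _ v => exact ⟨v, v, B.refl v, rfl, rfl⟩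
  symm q r h := by
    obtain ⟨v, w, h, hv, hw⟩ := h
    exact ⟨w, v, B.symm _ _ h, hw, hv⟩

def quotπ {A B : UGraph} (f g : A ⟶ B) : B ⟶ quotGraph f g :=
  ⟨Quot.mk _, fun v w h => ⟨v, w, h, rfl, rfl⟩⟩

lemma quot_w {A B : UGraph} (f g : A ⟶ B) : f ≫ quotπ f g = g ≫ quotπ f g :=
  hom_ext fun a => Quot.sound ⟨a, rfl, rfl⟩

def quotIsColimit {A B : UGraph} (f g : A ⟶ B) :
    IsColimit (Cofork.ofπ (quotπ f g) (quot_w f g)) := by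
  refine Cofork.IsColimit.mk _ (fun s => ⟨Quot.lift s.π.1 ?_, ?_⟩) (fun s => ?_) ?_
  · rintro v w ⟨a, rfl, rfl⟩
    exact congrFun (congrArg Subtype.val s.condition) a
  · rintro q r ⟨v, w, h, rfl, rfl⟩
    exact s.π.2 v w h
  · exact hom_ext fun v => rfl
  · intro s m hm
    apply hom_ext
    intro q
    induction q using Quot.ind with
    | _ v => exact congrFun (congrArg Subtype.val hm) v

/-- Vertex- and edge-surjectivity of any coequalizer cofork. -/
lemma cofork_surj {A B C : UGraph} {f g : A ⟶ B} (h : B ⟶ C) (w : f ≫ h = g ≫ h)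
    (t : IsColimit (Cofork.ofπ h w)) :
    Function.Surjective h.1 ∧
    (∀ v w', C.adj v w' → ∃ a b, B.adj a b ∧ h.1 a = v ∧ h.1 b = w') := by
  let e : C ≅ quotGraph f g := t.coconePointUniqueUpToIso (quotIsColimit f g)
  have he : h ≫ e.hom = quotπ f g := by
    have := t.comp_coconePointUniqueUpToIso_hom (quotIsColimit f g) WalkingParallelPair.one
    exact this
  have hinv : ∀ (v : C.V), e.inv.1 (e.hom.1 v) = v := fun v =>
    congrFun (congrArg Subtype.val e.hom_inv_id) v
  have key : ∀ (v : C.V) (b : B.V), e.hom.1 v = Quot.mk _ b → h.1 b = v := by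
    intro v b hb
    have : e.hom.1 (h.1 b) = e.hom.1 v := by
      rw [hb]; exact (congrFun (congrArg Subtype.val he) b).symm ▸ rfl
    have := congrArg e.inv.1 this
    rwa [hinv, hinv] at this
  constructor
  · intro v
    obtain ⟨b, hb⟩ := Quot.exists_rep (e.hom.1 v)
    exact ⟨b, key v b hb.symm⟩
  · intro v w' hadj
    have : (quotGraph f g).adj (e.hom.1 v) (e.hom.1 w') := e.hom.2 _ _ hadj
    obtain ⟨a, b, hab, ha, hb⟩ := this
    exact ⟨a, b, hab, key v a ha.symm, key w' b hb.symm⟩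

end UGraphAux
end UGraphAux
section UGraphPres
open CategoryTheory Limits
namespace UGraphAux

/-- Index type of (ordered) edges of `X`. -/
def EX (X : UGraph) : Type := {p : X.V × X.V // X.adj p.1 p.2}

/-- Disjoint union of one copy of `I1` per ordered edge. -/
def PG (X : UGraph) : UGraph := sigmaGraph (fun _ : EX X => I1)

def pgInj (X : UGraph) (e : EX X) : I1 ⟶ PG X := sigmaInj (fun _ : EX X => I1) e

/-- Endpoint evaluation. -/
def qX (X : UGraph) : PG X ⟶ X :=
  ⟨fun s => match s.2 with | false => s.1.1.1 | true => s.1.1.2, by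
    rintro x y ⟨e, a, b, rfl, rfl, -⟩
    cases a <;> cases b
    · exact X.refl _
    · exact e.2
    · exact X.symm _ _ e.2
    · exact X.refl _⟩

lemma pgInj_qX {X : UGraph} (e : EX X) : pgInj X e ≫ qX X = edg e.2 := by
  apply hom_ext; intro b; cases b <;> rfl

/-- The relation graph for the presentation of `X`. -/
def RG (X : UGraph) : UGraph where
  V := {p : (PG X).V × (PG X).V // (qX X).1 p.1 = (qX X).1 p.2}
  adj a b := a = b
  refl _ := rfl
  symm _ _ h := h.symm

def r1 (X : UGraph) : RG X ⟶ PG X :=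
  ⟨fun p => p.1.1, by rintro a b rfl; exact (PG X).refl _⟩

def r2 (X : UGraph) : RG X ⟶ PG X :=
  ⟨fun p => p.1.2, by rintro a b rfl; exact (PG X).refl _⟩

lemma wX (X : UGraph) : r1 X ≫ qX X = r2 X ≫ qX X :=
  hom_ext fun p => p.2

/-- The loop edge of a vertex. -/
def loopE {X : UGraph} (x : X.V) : EX X := ⟨(x, x), X.refl x⟩

lemma qX_loop {X : UGraph} (x : X.V) (b : Bool) :
    (qX X).1 ⟨loopE x, b⟩ = x := by cases b <;> rfl

/-- `qX` presents `X` as a coequalizer. -/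
def qXIsColimit (X : UGraph) : IsColimit (Cofork.ofπ (qX X) (wX X)) := by
  refine Cofork.IsColimit.mk _
    (fun s => ⟨fun x => s.π.1 ⟨loopE x, false⟩, ?_⟩) (fun s => ?_) ?_
  · intro x y h
    have h1 : s.π.1 ⟨loopE x, false⟩ = s.π.1 ⟨⟨(x, y), h⟩, false⟩ := by
      exact congrFun (congrArg Subtype.val s.condition) ⟨(⟨loopE x, false⟩, ⟨⟨(x, y), h⟩, false⟩), rfl⟩
    have h2 : s.π.1 ⟨loopE y, false⟩ = s.π.1 ⟨⟨(x, y), h⟩, true⟩ := by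
      exact congrFun (congrArg Subtype.val s.condition) ⟨(⟨loopE y, false⟩, ⟨⟨(x, y), h⟩, true⟩), rfl⟩
    show s.pt.adj (s.π.1 ⟨loopE x, false⟩) (s.π.1 ⟨loopE y, false⟩)
    rw [h1, h2]
    exact s.π.2 _ _ ⟨⟨(x, y), h⟩, false, true, rfl, rfl, trivial⟩
  · apply hom_ext
    rintro ⟨e, b⟩
    show s.π.1 ⟨loopE ((qX X).1 ⟨e, b⟩), false⟩ = s.π.1 ⟨e, b⟩
    exact congrFun (congrArg Subtype.val s.condition) ⟨(⟨loopE ((qX X).1 ⟨e, b⟩), false⟩, ⟨e, b⟩), rfl⟩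
  · intro s m hm
    apply hom_ext
    intro x
    exact congrFun (congrArg Subtype.val hm) ⟨loopE x, false⟩

/-- Discrete graph on the vertices of `X`, with its counit to `X`. -/
def DG (X : UGraph) : UGraph := sigmaGraph (fun _ : X.V => I0)

def dgInj (X : UGraph) (x : X.V) : I0 ⟶ DG X := sigmaInj (fun _ : X.V => I0) x

def dX (X : UGraph) : DG X ⟶ X :=
  ⟨fun s => s.1, by
    rintro a b ⟨x, u, v, rfl, rfl, -⟩
    exact X.refl x⟩

lemma dgInj_dX {X : UGraph} (x : X.V) : dgInj X x ≫ dX X = vtx x := rfl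

lemma dX_epi (X : UGraph) : Epi (dX X) :=
  epi_of_surj _ (fun x => ⟨⟨x, PUnit.unit⟩, rfl⟩)

end UGraphAux
end UGraphPres
section UGraphMonoidal
set_option linter.unusedSectionVars false
set_option linter.unusedVariables false
open CategoryTheory Limits MonoidalCategory
namespace UGraphAux

variable [M : MonoidalCategory UGraph]

lemma endo_I0 (f : I0 ⟶ I0) : f = 𝟙 I0 := toI0_unique _ _

lemma vtx_punit : vtx (PUnit.unit : I0.V) = 𝟙 I0 := hom_ext fun _ => rfl

/-- The unit of a biclosed structure has a vertex. -/
lemma unit_nonempty (hM : UBiclosed M) : Nonempty (𝟙_ UGraph).V := by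
  by_contra h
  rw [not_nonempty_iff] at h
  have hInit : IsInitial (𝟙_ UGraph) := IsInitial.ofUniqueHom
    (fun Y => ⟨fun v => (h.false v).elim, fun v _ _ => (h.false v).elim⟩)
    (fun Y m => hom_ext fun v => (h.false v).elim)
  haveI := (hM I0).2
  have hInit2 : IsInitial ((tensorRight I0).obj (𝟙_ UGraph)) :=
    IsInitial.isInitialObj (tensorRight I0) _ hInit
  have hInit3 : IsInitial I0 := hInit2.ofIso (λ_ I0)
  have : vtx (X := I1) false = vtx (X := I1) true := hInit3.hom_ext _ _
  exact Bool.noConfusion (congrFun (congrArg Subtype.val this) PUnit.unit)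

/-- A chosen vertex of the unit. -/
noncomputable def u0 (hM : UBiclosed M) : I0 ⟶ 𝟙_ UGraph :=
  vtx (unit_nonempty hM).some

/-- `I0 ⊗ I0` has a unique vertex. -/
lemma i00_sub (hM : UBiclosed M) : ∀ a b : ((I0 ⊗ I0 : UGraph)).V, a = b := by
  have hsub : ∀ a b : ((𝟙_ UGraph ⊗ I0 : UGraph)).V, a = b := by
    intro a b
    apply iso_inj (λ_ I0)
    exact rfl
  intro a b
  let sm : (I0 ⊗ I0 : UGraph) ⟶ (𝟙_ UGraph ⊗ I0 : UGraph) := u0 hM ▷ I0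
  let tm : (𝟙_ UGraph ⊗ I0 : UGraph) ⟶ (I0 ⊗ I0 : UGraph) := toI0 (𝟙_ UGraph) ▷ I0
  have hst : sm ≫ tm = 𝟙 _ := by
    show (u0 hM ▷ I0) ≫ (toI0 (𝟙_ UGraph) ▷ I0) = _
    rw [← comp_whiskerRight, endo_I0 (u0 hM ≫ toI0 _), id_whiskerRight]
  have ha : tm.1 (sm.1 a) = a := congrFun (congrArg Subtype.val hst) a
  have hb : tm.1 (sm.1 b) = b := congrFun (congrArg Subtype.val hst) b
  rw [← ha, ← hb, hsub (sm.1 a) (sm.1 b)]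

lemma i00_nonempty (hM : UBiclosed M) : Nonempty ((I0 ⊗ I0 : UGraph)).V :=
  ⟨((toI0 (𝟙_ UGraph) ▷ I0 : (𝟙_ UGraph ⊗ I0 : UGraph) ⟶ _)).1 ((λ_ I0).inv.1 PUnit.unit)⟩

/-- The unique vertex of `I0 ⊗ I0` as a morphism. -/
noncomputable def uu (hM : UBiclosed M) : I0 ⟶ (I0 ⊗ I0 : UGraph) :=
  vtx (i00_nonempty hM).some

lemma uu_unique (hM : UBiclosed M) (f : I0 ⟶ (I0 ⊗ I0 : UGraph)) : f = uu hM :=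
  hom_from_I0_unique (i00_sub hM) _ _

/-- The pairing of vertices. -/
noncomputable def pV (hM : UBiclosed M) {X Y : UGraph} (x : X.V) (y : Y.V) :
    ((X ⊗ Y : UGraph)).V :=
  ((vtx x ⊗ₘ vtx y : (I0 ⊗ I0 : UGraph) ⟶ _)).1 ((uu hM).1 PUnit.unit)

lemma pV_map (hM : UBiclosed M) {X X' Y Y' : UGraph} (f : X ⟶ X') (g : Y ⟶ Y')
    (x : X.V) (y : Y.V) : (f ⊗ₘ g).1 (pV hM x y) = pV hM (f.1 x) (g.1 y) := by
  show ((vtx x ⊗ₘ vtx y) ≫ (f ⊗ₘ g)).1 ((uu hM).1 PUnit.unit) = _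
  rw [tensorHom_comp_tensorHom, vtx_comp, vtx_comp]
  rfl

/-- Projections. -/
noncomputable def pr1 (hM : UBiclosed M) (X Y : UGraph) : (X ⊗ Y : UGraph) ⟶ X :=
  (𝟙 X ⊗ₘ (toI0 Y ≫ u0 hM)) ≫ (ρ_ X).hom

noncomputable def pr2 (hM : UBiclosed M) (X Y : UGraph) : (X ⊗ Y : UGraph) ⟶ Y :=
  ((toI0 X ≫ u0 hM) ⊗ₘ 𝟙 Y) ≫ (λ_ Y).hom

lemma pr1_pV (hM : UBiclosed M) {X Y : UGraph} (x : X.V) (y : Y.V) :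
    (pr1 hM X Y).1 (pV hM x y) = x := by
  have step : uu hM ≫ (vtx x ⊗ₘ vtx y) ≫ pr1 hM X Y = vtx x := by
    unfold pr1
    have e1 : (vtx x ⊗ₘ vtx y) ≫ (𝟙 X ⊗ₘ (toI0 Y ≫ u0 hM)) = (vtx x ⊗ₘ u0 hM) := by
      rw [tensorHom_comp_tensorHom, Category.comp_id, ← Category.assoc, toI0_unique (vtx y ≫ toI0 Y) (𝟙 I0),
        Category.id_comp]
    have e2 : (vtx x ⊗ₘ u0 hM) = (𝟙 I0 ⊗ₘ u0 hM) ≫ (vtx x ⊗ₘ 𝟙 (𝟙_ UGraph)) := by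
      rw [tensorHom_comp_tensorHom, Category.id_comp, Category.comp_id]
    have eA : (vtx x ⊗ₘ vtx y) ≫ ((𝟙 X ⊗ₘ (toI0 Y ≫ u0 hM)) ≫ (ρ_ X).hom) =
        ((𝟙 I0 ⊗ₘ u0 hM) ≫ (ρ_ I0).hom) ≫ vtx x := by
      rw [← Category.assoc, e1, e2, Category.assoc, tensorHom_id, rightUnitor_naturality,
        ← Category.assoc]
    rw [eA, ← Category.assoc, endo_I0 (uu hM ≫ (𝟙 I0 ⊗ₘ u0 hM) ≫ (ρ_ I0).hom), Category.id_comp]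
  exact congrFun (congrArg Subtype.val step) PUnit.unit

lemma pr2_pV (hM : UBiclosed M) {X Y : UGraph} (x : X.V) (y : Y.V) :
    (pr2 hM X Y).1 (pV hM x y) = y := by
  have step : uu hM ≫ (vtx x ⊗ₘ vtx y) ≫ pr2 hM X Y = vtx y := by
    unfold pr2
    have e1 : (vtx x ⊗ₘ vtx y) ≫ ((toI0 X ≫ u0 hM) ⊗ₘ 𝟙 Y) = (u0 hM ⊗ₘ vtx y) := by
      rw [tensorHom_comp_tensorHom, Category.comp_id, ← Category.assoc, toI0_unique (vtx x ≫ toI0 X) (𝟙 I0),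
        Category.id_comp]
    have e2 : (u0 hM ⊗ₘ vtx y) = (u0 hM ⊗ₘ 𝟙 I0) ≫ (𝟙 (𝟙_ UGraph) ⊗ₘ vtx y) := by
      rw [tensorHom_comp_tensorHom, Category.id_comp, Category.comp_id]
    have eA : (vtx x ⊗ₘ vtx y) ≫ (((toI0 X ≫ u0 hM) ⊗ₘ 𝟙 Y) ≫ (λ_ Y).hom) =
        ((u0 hM ⊗ₘ 𝟙 I0) ≫ (λ_ I0).hom) ≫ vtx y := by
      rw [← Category.assoc, e1, e2, Category.assoc, id_tensorHom, leftUnitor_naturality,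
        ← Category.assoc]
    rw [eA, ← Category.assoc, endo_I0 (uu hM ≫ (u0 hM ⊗ₘ 𝟙 I0) ≫ (λ_ I0).hom), Category.id_comp]
  exact congrFun (congrArg Subtype.val step) PUnit.unit

lemma pV_inj (hM : UBiclosed M) {X Y : UGraph} {x x' : X.V} {y y' : Y.V}
    (h : pV hM x y = pV hM x' y') : x = x' ∧ y = y' := by
  constructor
  · have := congrArg (pr1 hM X Y).1 h
    rwa [pr1_pV, pr1_pV] at this
  · have := congrArg (pr2 hM X Y).1 h
    rwa [pr2_pV, pr2_pV] at this

end UGraphAux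
end UGraphMonoidal
section UGraphMonoidal2
set_option linter.unusedSectionVars false
set_option linter.unusedVariables false
set_option maxHeartbeats 1000000
open CategoryTheory Limits MonoidalCategory
namespace UGraphAux

variable [M : MonoidalCategory UGraph]

/-- Every vertex of a tensor product is a pairing. -/
lemma pV_surj (hM : UBiclosed M) (X Y : UGraph) (v : ((X ⊗ Y : UGraph)).V) :
    ∃ x y, pV hM x y = v := by
  haveI := (hM Y).2
  haveI := (hM (DG X)).1
  haveI := (hM (DG Y)).2
  haveI := (hM I0).1
  haveI := dX_epi X
  haveI := dX_epi Y
  have e1 : Epi ((tensorRight Y).map (dX X)) := inferInstance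
  obtain ⟨w, hw⟩ := surj_of_epi _ e1 v
  have e2 : Epi ((tensorLeft (DG X)).map (dX Y)) := inferInstance
  obtain ⟨w', hw'⟩ := surj_of_epi _ e2 w
  have c1 := isColimitCofanMkObjOfIsColimit (tensorRight (DG Y))
    (fun _ : X.V => I0) (sigmaInj (fun _ : X.V => I0)) (sigmaIsColimit _)
  obtain ⟨x, a, ha⟩ := (cofan_lift _ c1).1 w'
  have c2 := isColimitCofanMkObjOfIsColimit (tensorLeft I0)
    (fun _ : Y.V => I0) (sigmaInj (fun _ : Y.V => I0)) (sigmaIsColimit _)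
  obtain ⟨y, b, hb⟩ := (cofan_lift _ c2).1 a
  refine ⟨x, y, ?_⟩
  have hcomp : (tensorLeft I0).map (sigmaInj (fun _ : Y.V => I0) y) ≫
      (tensorRight (DG Y)).map (sigmaInj (fun _ : X.V => I0) x) ≫
      (tensorLeft (DG X)).map (dX Y) ≫ (tensorRight Y).map (dX X) =
      (vtx x ⊗ₘ vtx y) := by
    show (I0 ◁ dgInj Y y) ≫ (dgInj X x ▷ DG Y) ≫ (DG X ◁ dX Y) ≫ (dX X ▷ Y) = _
    rw [← Category.assoc, ← tensorHom_def']
    rw [show (DG X ◁ dX Y) ≫ (dX X ▷ Y) = (dX X ⊗ₘ dX Y) from (tensorHom_def' _ _).symm]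
    rw [tensorHom_comp_tensorHom, dgInj_dX]
    rfl
  have hb' : b = (uu hM).1 PUnit.unit := i00_sub hM _ _
  rw [← hw, ← hw', ← ha, ← hb, hb']
  exact (congrFun (congrArg Subtype.val hcomp) ((uu hM).1 PUnit.unit)).symm

/-- Horizontal edges. -/
lemma adj_pV_horiz (hM : UBiclosed M) {X Y : UGraph} {x x' : X.V} (h : X.adj x x') (y : Y.V) :
    ((X ⊗ Y : UGraph)).adj (pV hM x y) (pV hM x' y) := by
  let r : I1 ⟶ (I1 ⊗ I0 : UGraph) := (ρ_ I1).inv ≫ (I1 ◁ toI0 (𝟙_ UGraph))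
  have hr : ∀ b : Bool, r.1 b = pV hM (show I1.V from b) (PUnit.unit : I0.V) := by
    intro b
    have key : vtx (X := I1) b ≫ r = uu hM ≫ (vtx (X := I1) b ⊗ₘ 𝟙 I0) := by
      show vtx (X := I1) b ≫ (ρ_ I1).inv ≫ (I1 ◁ toI0 (𝟙_ UGraph)) = _
      rw [← Category.assoc, rightUnitor_inv_naturality, Category.assoc, ← whisker_exchange,
        ← Category.assoc, uu_unique hM ((ρ_ I0).inv ≫ (I0 ◁ toI0 (𝟙_ UGraph))), tensorHom_id]
    calc r.1 b = (vtx (X := I1) b ≫ r).1 PUnit.unit := rfl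
      _ = (uu hM ≫ (vtx (X := I1) b ⊗ₘ 𝟙 I0)).1 PUnit.unit := by rw [key]
      _ = (vtx (X := I1) b ⊗ₘ 𝟙 I0).1 ((uu hM).1 PUnit.unit) := rfl
      _ = pV hM b PUnit.unit := by
            rw [i00_sub hM ((uu hM).1 PUnit.unit) (pV hM PUnit.unit PUnit.unit),
              pV_map hM (vtx (X := I1) b) (𝟙 I0) PUnit.unit PUnit.unit]
            rfl
  have hadj : ((I1 ⊗ I0 : UGraph)).adj (r.1 false) (r.1 true) := r.2 _ _ trivial
  rw [hr false, hr true] at hadj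
  have := (edg h ⊗ₘ vtx y).2 _ _ hadj
  erw [pV_map, pV_map] at this
  exact this

/-- Vertical edges. -/
lemma adj_pV_vert (hM : UBiclosed M) {X Y : UGraph} (x : X.V) {y y' : Y.V} (h : Y.adj y y') :
    ((X ⊗ Y : UGraph)).adj (pV hM x y) (pV hM x y') := by
  let r : I1 ⟶ (I0 ⊗ I1 : UGraph) := (λ_ I1).inv ≫ (toI0 (𝟙_ UGraph) ▷ I1)
  have hr : ∀ b : Bool, r.1 b = pV hM (PUnit.unit : I0.V) (show I1.V from b) := by
    intro b
    have key : vtx (X := I1) b ≫ r = uu hM ≫ (𝟙 I0 ⊗ₘ vtx (X := I1) b) := by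
      show vtx (X := I1) b ≫ (λ_ I1).inv ≫ (toI0 (𝟙_ UGraph) ▷ I1) = _
      rw [← Category.assoc, leftUnitor_inv_naturality, Category.assoc, whisker_exchange,
        ← Category.assoc, uu_unique hM ((λ_ I0).inv ≫ (toI0 (𝟙_ UGraph) ▷ I0)), id_tensorHom]
    calc r.1 b = (vtx (X := I1) b ≫ r).1 PUnit.unit := rfl
      _ = (uu hM ≫ (𝟙 I0 ⊗ₘ vtx (X := I1) b)).1 PUnit.unit := by rw [key]
      _ = (𝟙 I0 ⊗ₘ vtx (X := I1) b).1 ((uu hM).1 PUnit.unit) := rfl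
      _ = pV hM PUnit.unit b := by
            rw [i00_sub hM ((uu hM).1 PUnit.unit) (pV hM PUnit.unit PUnit.unit),
              pV_map hM (𝟙 I0) (vtx (X := I1) b) PUnit.unit PUnit.unit]
            rfl
  have hadj : ((I0 ⊗ I1 : UGraph)).adj (r.1 false) (r.1 true) := r.2 _ _ trivial
  rw [hr false, hr true] at hadj
  have := (vtx x ⊗ₘ edg h).2 _ _ hadj
  erw [pV_map, pV_map] at this
  exact this

/-- The diagonal proposition deciding box vs categorical product. -/
def diagP (hM : UBiclosed M) : Prop :=
  ((I1 ⊗ I1 : UGraph)).adj (pV hM false false) (pV hM true true)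

/-- Diagonal edges, given `diagP`. -/
lemma adj_pV_diag (hM : UBiclosed M) (hδ : diagP hM) {X Y : UGraph}
    {x x' : X.V} {y y' : Y.V} (hx : X.adj x x') (hy : Y.adj y y') :
    ((X ⊗ Y : UGraph)).adj (pV hM x y) (pV hM x' y') := by
  have := (edg hx ⊗ₘ edg hy).2 _ _ hδ
  erw [pV_map, pV_map, edg_ff, edg_ff, edg_tt, edg_tt] at this
  exact this

/-- The swap automorphism of `I1`. -/
def sw : I1 ≅ I1 where
  hom := ⟨fun b => !b, fun _ _ _ => trivial⟩
  inv := ⟨fun b => !b, fun _ _ _ => trivial⟩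
  hom_inv_id := hom_ext fun b => Bool.not_not b
  inv_hom_id := hom_ext fun b => Bool.not_not b

lemma diag_flip (hM : UBiclosed M) {a b a' b' : Bool}
    (h : ((I1 ⊗ I1 : UGraph)).adj (pV hM a b) (pV hM a' b')) :
    ((I1 ⊗ I1 : UGraph)).adj (pV hM (!a) b) (pV hM (!a') b') := by
  have := (sw.hom ⊗ₘ 𝟙 I1).2 _ _ h
  erw [pV_map, pV_map] at this
  exact this

lemma q_adj_diag (hM : UBiclosed M) {a b a' b' : Bool}
    (h : ((I1 ⊗ I1 : UGraph)).adj (pV hM a b) (pV hM a' b'))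
    (ha : a ≠ a') (hb : b ≠ b') : diagP hM := by
  cases a <;> cases a' <;> cases b <;> cases b' <;> simp at ha hb <;> try exact h
  · exact (I1 ⊗ I1 : UGraph).symm _ _ (diag_flip hM h)
  · exact diag_flip hM h
  · exact (I1 ⊗ I1 : UGraph).symm _ _ h

/-- Full classification of adjacency in a tensor product. -/
lemma adj_pV_iff (hM : UBiclosed M) (X Y : UGraph) (x x' : X.V) (y y' : Y.V) :
    ((X ⊗ Y : UGraph)).adj (pV hM x y) (pV hM x' y') ↔
      ((x = x' ∧ Y.adj y y') ∨ (X.adj x x' ∧ y = y') ∨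
        (X.adj x x' ∧ Y.adj y y' ∧ diagP hM)) := by
  constructor
  · intro h
    haveI := (hM Y).2
    haveI := (hM (PG X)).1
    haveI := (hM (PG Y)).2
    haveI := (hM I1).1
    have t1 := isColimitCoforkMapOfIsColimit (tensorRight Y) (wX X) (qXIsColimit X)
    obtain ⟨a1, b1, hadj1, ha1, hb1⟩ := (cofork_surj _ _ t1).2 _ _ h
    have t2 := isColimitCoforkMapOfIsColimit (tensorLeft (PG X)) (wX Y) (qXIsColimit Y)
    obtain ⟨a2, b2, hadj2, ha2, hb2⟩ := (cofork_surj _ _ t2).2 _ _ hadj1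
    have c1 := isColimitCofanMkObjOfIsColimit (tensorRight (PG Y))
      (fun _ : EX X => I1) (sigmaInj (fun _ : EX X => I1)) (sigmaIsColimit _)
    obtain ⟨e, a3, b3, hadj3, ha3, hb3⟩ := (cofan_lift _ c1).2 _ _ hadj2
    have c2 := isColimitCofanMkObjOfIsColimit (tensorLeft I1)
      (fun _ : EX Y => I1) (sigmaInj (fun _ : EX Y => I1)) (sigmaIsColimit _)
    obtain ⟨f, a4, b4, hadj4, ha4, hb4⟩ := (cofan_lift _ c2).2 _ _ hadj3
    obtain ⟨a, b, ha4'⟩ := pV_surj hM I1 I1 a4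
    obtain ⟨a', b', hb4'⟩ := pV_surj hM I1 I1 b4
    have hcomp : (tensorLeft I1).map (sigmaInj (fun _ : EX Y => I1) f) ≫
        (tensorRight (PG Y)).map (sigmaInj (fun _ : EX X => I1) e) ≫
        (tensorLeft (PG X)).map (qX Y) ≫ (tensorRight Y).map (qX X) =
        (edg e.2 ⊗ₘ edg f.2) := by
      show (I1 ◁ pgInj Y f) ≫ (pgInj X e ▷ PG Y) ≫ (PG X ◁ qX Y) ≫ (qX X ▷ Y) = _
      rw [← Category.assoc, ← tensorHom_def']
      rw [show (PG X ◁ qX Y) ≫ (qX X ▷ Y) = (qX X ⊗ₘ qX Y) from (tensorHom_def' _ _).symm]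
      rw [tensorHom_comp_tensorHom, pgInj_qX, pgInj_qX]
    have hxv : pV hM x y = pV hM ((edg e.2).1 a) ((edg f.2).1 b) := by
      rw [← ha1, ← ha2, ← ha3, ← ha4, ← ha4']
      have := congrFun (congrArg Subtype.val hcomp) (pV hM a b)
      rw [pV_map] at this
      exact this
    have hyv : pV hM x' y' = pV hM ((edg e.2).1 a') ((edg f.2).1 b') := by
      rw [← hb1, ← hb2, ← hb3, ← hb4, ← hb4']
      have := congrFun (congrArg Subtype.val hcomp) (pV hM a' b')
      rw [pV_map] at this
      exact this
    obtain ⟨hx1, hy1⟩ := pV_inj hM hxv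
    obtain ⟨hx2, hy2⟩ := pV_inj hM hyv
    rw [← ha4', ← hb4'] at hadj4
    by_cases hA : a = a'
    · refine Or.inl ⟨?_, ?_⟩
      · rw [hx1, hx2, hA]
      · rw [hy1, hy2]; exact (edg f.2).2 b b' trivial
    · by_cases hB : b = b'
      · refine Or.inr (Or.inl ⟨?_, ?_⟩)
        · rw [hx1, hx2]; exact (edg e.2).2 a a' trivial
        · rw [hy1, hy2, hB]
      · refine Or.inr (Or.inr ⟨?_, ?_, q_adj_diag hM hadj4 hA hB⟩)
        · rw [hx1, hx2]; exact (edg e.2).2 a a' trivial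
        · rw [hy1, hy2]; exact (edg f.2).2 b b' trivial
  · rintro (⟨rfl, hy⟩ | ⟨hx, rfl⟩ | ⟨hx, hy, hδ⟩)
    · exact adj_pV_vert hM x hy
    · exact adj_pV_horiz hM hx y
    · exact adj_pV_diag hM hδ hx hy

end UGraphAux
end UGraphMonoidal2
section UGraphFinal
set_option linter.unusedSectionVars false
set_option maxHeartbeats 1000000
open CategoryTheory Limits MonoidalCategory
namespace UGraphAux

variable [M : MonoidalCategory UGraph]

lemma unit_sub (hM : UBiclosed M) : ∀ a b : (𝟙_ UGraph).V, a = b := by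
  intro a b
  have h : pV (Y := I0) hM a PUnit.unit = pV (Y := I0) hM b PUnit.unit := by
    apply iso_inj (λ_ I0)
    rfl
  exact (pV_inj hM h).1

/-- The unit is the one-point graph. -/
noncomputable def unitIso (hM : UBiclosed M) : 𝟙_ UGraph ≅ I0 where
  hom := toI0 _
  inv := u0 hM
  hom_inv_id := hom_ext fun v => unit_sub hM _ v
  inv_hom_id := toI0_unique _ _

lemma whiskerL_pV (hM : UBiclosed M) {X Y Y' : UGraph} (g : Y ⟶ Y') (x : X.V) (y : Y.V) :
    (X ◁ g).1 (pV hM x y) = pV hM x (g.1 y) := by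
  rw [show (X ◁ g) = (𝟙 X ⊗ₘ g) from (id_tensorHom X g).symm, pV_map]
  rfl

lemma whiskerR_pV (hM : UBiclosed M) {X X' Y : UGraph} (f : X ⟶ X') (x : X.V) (y : Y.V) :
    (f ▷ Y).1 (pV hM x y) = pV hM (f.1 x) y := by
  rw [show (f ▷ Y) = (f ⊗ₘ 𝟙 Y) from (tensorHom_id f Y).symm, pV_map]
  rfl

/-- Component isomorphism in the box case. -/
noncomputable def boxIso (hM : UBiclosed M) (hδ : ¬ diagP hM) (X Y : UGraph) :
    ((MonoidalCategory.curriedTensor UGraph).obj X).obj Y ≅ (uboxBifunctor.obj X).obj Y where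
  hom := ⟨fun v => ((pr1 hM X Y).1 v, (pr2 hM X Y).1 v), by
    intro v w hvw
    obtain ⟨x, y, rfl⟩ := pV_surj hM X Y v
    obtain ⟨x', y', rfl⟩ := pV_surj hM X Y w
    rcases (adj_pV_iff hM X Y x x' y y').mp hvw with ⟨h1, h2⟩ | ⟨h1, h2⟩ | ⟨h1, h2, h3⟩
    · exact Or.inl (by simp only [pr1_pV, pr2_pV]; exact ⟨h1, h2⟩)
    · exact Or.inr (by simp only [pr1_pV, pr2_pV]; exact ⟨h1, h2⟩)
    · exact absurd h3 hδ⟩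
  inv := ⟨fun z => pV hM z.1 z.2, by
    rintro ⟨x, y⟩ ⟨x', y'⟩ (⟨h1, h2⟩ | ⟨h1, h2⟩)
    · dsimp only at h1 h2 ⊢
      subst h1
      exact adj_pV_vert hM x h2
    · dsimp only at h1 h2 ⊢
      subst h2
      exact adj_pV_horiz hM h1 y⟩
  hom_inv_id := hom_ext fun v => by
    obtain ⟨x, y, rfl⟩ := pV_surj hM X Y v
    show pV hM ((pr1 hM X Y).1 (pV hM x y)) ((pr2 hM X Y).1 (pV hM x y)) = pV hM x y
    rw [pr1_pV, pr2_pV]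
  inv_hom_id := hom_ext fun z => by
    show ((pr1 hM X Y).1 (pV hM z.1 z.2), (pr2 hM X Y).1 (pV hM z.1 z.2)) = z
    rw [pr1_pV, pr2_pV]
    rfl

/-- Component isomorphism in the categorical-product case. -/
noncomputable def catIso (hM : UBiclosed M) (hδ : diagP hM) (X Y : UGraph) :
    ((MonoidalCategory.curriedTensor UGraph).obj X).obj Y ≅ (ucatBifunctor.obj X).obj Y where
  hom := ⟨fun v => ((pr1 hM X Y).1 v, (pr2 hM X Y).1 v), by
    intro v w hvw
    obtain ⟨x, y, rfl⟩ := pV_surj hM X Y v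
    obtain ⟨x', y', rfl⟩ := pV_surj hM X Y w
    rcases (adj_pV_iff hM X Y x x' y y').mp hvw with ⟨h1, h2⟩ | ⟨h1, h2⟩ | ⟨h1, h2, h3⟩
    · exact Or.inl (by simp only [pr1_pV, pr2_pV]; exact ⟨h1, h2⟩)
    · exact Or.inr (Or.inl (by simp only [pr1_pV, pr2_pV]; exact ⟨h1, h2⟩))
    · exact Or.inr (Or.inr (by simp only [pr1_pV, pr2_pV]; exact ⟨h1, h2⟩))⟩
  inv := ⟨fun z => pV hM z.1 z.2, by
    rintro ⟨x, y⟩ ⟨x', y'⟩ (⟨h1, h2⟩ | ⟨h1, h2⟩ | ⟨h1, h2⟩)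
    · dsimp only at h1 h2 ⊢
      subst h1
      exact adj_pV_vert hM x h2
    · dsimp only at h1 h2 ⊢
      subst h2
      exact adj_pV_horiz hM h1 y
    · dsimp only at h1 h2 ⊢
      exact adj_pV_diag hM hδ h1 h2⟩
  hom_inv_id := hom_ext fun v => by
    obtain ⟨x, y, rfl⟩ := pV_surj hM X Y v
    show pV hM ((pr1 hM X Y).1 (pV hM x y)) ((pr2 hM X Y).1 (pV hM x y)) = pV hM x y
    rw [pr1_pV, pr2_pV]
  inv_hom_id := hom_ext fun z => by
    show ((pr1 hM X Y).1 (pV hM z.1 z.2), (pr2 hM X Y).1 (pV hM z.1 z.2)) = z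
    rw [pr1_pV, pr2_pV]
    rfl

/-- The tensor product is the box product. -/
noncomputable def boxNatIso (hM : UBiclosed M) (hδ : ¬ diagP hM) :
    MonoidalCategory.curriedTensor UGraph ≅ uboxBifunctor := by
  refine NatIso.ofComponents
    (fun X => NatIso.ofComponents (fun Y => boxIso hM hδ X Y) ?_) ?_
  · intro Y Y' g
    apply hom_ext
    intro v
    obtain ⟨x, y, rfl⟩ := pV_surj hM _ _ v
    show (boxIso hM hδ X Y').hom.1 ((X ◁ g).1 (pV hM x y)) =
      ((uboxBifunctor.obj X).map g).1 ((boxIso hM hδ X Y).hom.1 (pV hM x y))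
    rw [whiskerL_pV]
    show ((pr1 hM X Y').1 (pV hM x (g.1 y)), (pr2 hM X Y').1 (pV hM x (g.1 y))) =
      ((pr1 hM X Y).1 (pV hM x y), g.1 ((pr2 hM X Y).1 (pV hM x y)))
    rw [pr1_pV, pr2_pV, pr1_pV, pr2_pV]
  · intro X X' f
    apply NatTrans.ext
    funext Y
    apply hom_ext
    intro v
    obtain ⟨x, y, rfl⟩ := pV_surj hM _ _ v
    show (boxIso hM hδ X' Y).hom.1 ((f ▷ Y).1 (pV hM x y)) =
      ((uboxBifunctor.map f).app Y).1 ((boxIso hM hδ X Y).hom.1 (pV hM x y))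
    rw [whiskerR_pV]
    show ((pr1 hM X' Y).1 (pV hM (f.1 x) y), (pr2 hM X' Y).1 (pV hM (f.1 x) y)) =
      (f.1 ((pr1 hM X Y).1 (pV hM x y)), (pr2 hM X Y).1 (pV hM x y))
    rw [pr1_pV, pr2_pV, pr1_pV, pr2_pV]

/-- The tensor product is the categorical product. -/
noncomputable def catNatIso (hM : UBiclosed M) (hδ : diagP hM) :
    MonoidalCategory.curriedTensor UGraph ≅ ucatBifunctor := by
  refine NatIso.ofComponents
    (fun X => NatIso.ofComponents (fun Y => catIso hM hδ X Y) ?_) ?_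
  · intro Y Y' g
    apply hom_ext
    intro v
    obtain ⟨x, y, rfl⟩ := pV_surj hM _ _ v
    show (catIso hM hδ X Y').hom.1 ((X ◁ g).1 (pV hM x y)) =
      ((ucatBifunctor.obj X).map g).1 ((catIso hM hδ X Y).hom.1 (pV hM x y))
    rw [whiskerL_pV]
    show ((pr1 hM X Y').1 (pV hM x (g.1 y)), (pr2 hM X Y').1 (pV hM x (g.1 y))) =
      ((pr1 hM X Y).1 (pV hM x y), g.1 ((pr2 hM X Y).1 (pV hM x y)))
    rw [pr1_pV, pr2_pV, pr1_pV, pr2_pV]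
  · intro X X' f
    apply NatTrans.ext
    funext Y
    apply hom_ext
    intro v
    obtain ⟨x, y, rfl⟩ := pV_surj hM _ _ v
    show (catIso hM hδ X' Y).hom.1 ((f ▷ Y).1 (pV hM x y)) =
      ((ucatBifunctor.map f).app Y).1 ((catIso hM hδ X Y).hom.1 (pV hM x y))
    rw [whiskerR_pV]
    show ((pr1 hM X' Y).1 (pV hM (f.1 x) y), (pr2 hM X' Y).1 (pV hM (f.1 x) y)) =
      (f.1 ((pr1 hM X Y).1 (pV hM x y)), (pr2 hM X Y).1 (pV hM x y))
    rw [pr1_pV, pr2_pV, pr1_pV, pr2_pV]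

end UGraphAux
end UGraphFinal

/-- The only biclosed monoidal structures on the category of undirected reflexive
graphs are, up to isomorphism, the box product `□` and the categorical product `⊠`,
both with unit `I₀`: for any biclosed monoidal structure, the tensor bifunctor is
naturally isomorphic to one of `□`, `⊠`, and its unit is isomorphic to `I₀`. -/
theorem uGraph_biclosed_classification :
    ∀ M : MonoidalCategory UGraph, UBiclosed M →
      (Nonempty (M.tensorUnit ≅ I0)) ∧
      (Nonempty ((@MonoidalCategory.curriedTensor UGraph _ M) ≅ uboxBifunctor) ∨
       Nonempty ((@MonoidalCategory.curriedTensor UGraph _ M) ≅ ucatBifunctor)) := by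
  intro M hM
  constructor
  · exact ⟨@UGraphAux.unitIso M hM⟩
  · by_cases hδ : @UGraphAux.diagP M hM
    · exact Or.inr ⟨@UGraphAux.catNatIso M hM hδ⟩
    · exact Or.inl ⟨@UGraphAux.boxNatIso M hM hδ⟩
end
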